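/- arXiv:1109.2478 — 4 statements merged into one kernel-verified Lean document; each statement's English description precedes it below -/
import Mathlib

section
/- In the ring of formal power series ℤ⟦q⟧, the following identity holds: f(q⁵,q³)² − q·f(q,q⁷)² = φ(q)·φ(q²). -/
/-- `fJacobi a b` is the theta-type series `f(q^a, q^b) = ∑_{j ∈ ℤ} q^{a·j(j−1)/2 + b·j(j+1)/2}`
in `ℤ⟦q⟧`. For each exponent `N`, all integers `j` contributing to the coefficient of `q^N`
lie in `[-(N+1), N+1]` (assuming `a`, `b` not both zero), so the coefficient is a finite count. -/
noncomputable def fJacobi (a b : ℕ) : PowerSeries ℤ :=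
  PowerSeries.mk fun N =>
    ∑ j ∈ Finset.Icc (-(N : ℤ) - 1) ((N : ℤ) + 1),
      if (a : ℤ) * (j * (j - 1) / 2) + (b : ℤ) * (j * (j + 1) / 2) = (N : ℤ) then 1 else 0

/-- `gJacobi a b` is the signed theta series
`g(q^a, q^b) = ∑_{j ∈ ℤ} (−1)^j q^{a·j(j−1)/2 + b·j(j+1)/2}` in `ℤ⟦q⟧`. -/
noncomputable def gJacobi (a b : ℕ) : PowerSeries ℤ :=
  PowerSeries.mk fun N =>
    ∑ j ∈ Finset.Icc (-(N : ℤ) - 1) ((N : ℤ) + 1),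
      if (a : ℤ) * (j * (j - 1) / 2) + (b : ℤ) * (j * (j + 1) / 2) = (N : ℤ)
      then (-1 : ℤ) ^ j.natAbs else 0

/-- `eulerPhi = φ(q) = ∏_{j=1}^∞ (1 − q^j)` in `ℤ⟦q⟧`: the coefficient of `q^N` is the
(stable) coefficient of `q^N` in the partial product `∏_{j=1}^{N+1} (1 − q^j)`. -/
noncomputable def eulerPhi : PowerSeries ℤ :=
  PowerSeries.mk fun N =>
    PowerSeries.coeff N
      (∏ j ∈ Finset.range (N + 1), (1 - (PowerSeries.X : PowerSeries ℤ) ^ (j + 1)))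

/-- `φ(q²) = ∏_{j=1}^∞ (1 − q^{2j})` in `ℤ⟦q⟧`. -/
noncomputable def eulerPhi2 : PowerSeries ℤ :=
  PowerSeries.mk fun N =>
    PowerSeries.coeff N
      (∏ j ∈ Finset.range (N + 1), (1 - (PowerSeries.X : PowerSeries ℤ) ^ (2 * (j + 1))))

/-- `S1 = ∑_{i=0}^∞ q^{2i²} / ∏_{k=1}^{2i}(1−q^k)` in `ℤ⟦q⟧`: the coefficient of `q^N` is the
(stable) coefficient of `q^N` in the partial sum over `i ≤ N` (terms with `i > N` have lowest
degree `2i² > N`). Each denominator has constant term `1`, hence is inverted via `invOfUnit`. -/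
noncomputable def S1 : PowerSeries ℤ :=
  PowerSeries.mk fun N =>
    PowerSeries.coeff N (∑ i ∈ Finset.range (N + 1),
      (PowerSeries.X : PowerSeries ℤ) ^ (2 * i ^ 2) *
        PowerSeries.invOfUnit
          (∏ k ∈ Finset.range (2 * i), (1 - (PowerSeries.X : PowerSeries ℤ) ^ (k + 1))) 1)

/-- `S2 = ∑_{i=0}^∞ q^{2i²+2i} / ∏_{k=1}^{2i+1}(1−q^k)` in `ℤ⟦q⟧`. -/
noncomputable def S2 : PowerSeries ℤ :=
  PowerSeries.mk fun N =>
    PowerSeries.coeff N (∑ i ∈ Finset.range (N + 1),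
      (PowerSeries.X : PowerSeries ℤ) ^ (2 * i ^ 2 + 2 * i) *
        PowerSeries.invOfUnit
          (∏ k ∈ Finset.range (2 * i + 1), (1 - (PowerSeries.X : PowerSeries ℤ) ^ (k + 1))) 1)

/-- `pDO m` is the number of partitions of `m` into distinct odd parts. -/
noncomputable def pDO (m : ℕ) : ℕ :=
  Nat.card {p : m.Partition // p.parts.Nodup ∧ ∀ i ∈ p.parts, Odd i}

/-- `aCount k` is the number of partitions `(λ₁^{f₁},…,λ_j^{f_j})` of `3k` (encoded as the list
`[(λ₁,f₁),…,(λ_j,f_j)]` with `λ₁ > ⋯ > λ_j > 0`) with all multiplicities `1 ≤ fᵢ ≤ 2`,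
`f₁ ≡ λ₁ (mod 3)` and `fᵢ + fᵢ₊₁ + λᵢ − λᵢ₊₁ ≡ 0 (mod 3)` for `1 ≤ i < j`. -/
noncomputable def aCount (k : ℕ) : ℕ :=
  Nat.card {L : List (ℕ × ℕ) //
    (L.map fun p => p.2 * p.1).sum = 3 * k ∧
    (∀ p ∈ L, 0 < p.1 ∧ 1 ≤ p.2 ∧ p.2 ≤ 2) ∧
    List.Chain' (fun p q => q.1 < p.1 ∧ ((p.2 : ℤ) + q.2 + p.1 - q.1) % 3 = 0) L ∧
    ∀ p ∈ L.head?, (p.2 : ℤ) % 3 = (p.1 : ℤ) % 3}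

/-- `bCount k` : same as `aCount` but for partitions of `3k − 2`. -/
noncomputable def bCount (k : ℕ) : ℕ :=
  Nat.card {L : List (ℕ × ℕ) //
    (L.map fun p => p.2 * p.1).sum = 3 * k - 2 ∧
    (∀ p ∈ L, 0 < p.1 ∧ 1 ≤ p.2 ∧ p.2 ≤ 2) ∧
    List.Chain' (fun p q => q.1 < p.1 ∧ ((p.2 : ℤ) + q.2 + p.1 - q.1) % 3 = 0) L ∧
    ∀ p ∈ L.head?, (p.2 : ℤ) % 3 = (p.1 : ℤ) % 3}

/-- Number of partitions of `n` all of whose parts have residue mod 15 outside `{r₁, r₂, r₃}`. -/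
noncomputable def pAvoid (n : ℕ) (r₁ r₂ r₃ : ℕ) : ℕ :=
  Nat.card {p : n.Partition // ∀ i ∈ p.parts, i % 15 ≠ r₁ ∧ i % 15 ≠ r₂ ∧ i % 15 ≠ r₃}


/-!
Write `f(q^a, q^b) = ∑_j q^{E_{a,b}(j)}` with `E_{a,b}(j) = a·j(j-1)/2 + b·j(j+1)/2`, and
`g(q^a, q^b) = ∑_j (-1)^j q^{E_{a,b}(j)}`. The left side is
`∑_{u,v} q^{4u²-u+4v²-v} - ∑_{u,v} q^{4u²+3u+1+4v²+3v}`, and the substitutions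
`(s, d) = (u + v, u - v)` and `(s, d) = (u + v + 1, u - v)` turn both exponents into
`2s² - s + 2d² = E_{3,1}(s) + E_{2,2}(d)`, with `s + d` even in the first case and odd in the
second. Hence the left side is `g(q³, q) · g(q², q²)`.

By the Jacobi triple product,
`g(q^a, q^b) = ∏_{n ≥ 0} (1 - q^{(a+b)n+a}) (1 - q^{(a+b)n+b}) (1 - q^{(a+b)(n+1)})`, so
`g(q³, q) · g(q², q²) = (q; q⁴)_∞ (q³; q⁴)_∞ (q⁴; q⁴)_∞ · (q²; q⁴)_∞² (q⁴; q⁴)_∞ = φ(q) φ(q²)`.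
The triple product follows from its finite form, whose coefficients are the Gaussian binomials
`[2M, M + j]` in `q^{a+b}`, because `[2M, M - |j|] · ∏_{i < M} (1 - q^{(a+b)(i+1)}) ≡ 1` modulo
`q^{(a+b)(M - |j| + 1)}`. Identities between infinite series are checked modulo every `X^N`.
-/

open PowerSeries Finset

section Congruence

variable {R : Type*} [CommRing R]

theorem pow_smodEq_zero {x : R} {m n : ℕ} (h : m ≤ n) : x ^ n ≡ 0 [SMOD Ideal.span {x ^ m}] :=
  SModEq.zero.mpr (Ideal.mem_span_singleton.mpr (pow_dvd_pow x h))

theorem SModEq.mono_span_pow {x a b : R} {m n : ℕ} (h : m ≤ n)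
    (hab : a ≡ b [SMOD Ideal.span {x ^ n}]) : a ≡ b [SMOD Ideal.span {x ^ m}] :=
  hab.mono (Ideal.span_singleton_le_span_singleton.mpr (pow_dvd_pow x h))

theorem SModEq.mul_left_span {a b c y : R} (h : a ≡ b [SMOD Ideal.span {y}]) :
    c * a ≡ c * b [SMOD Ideal.span {c * y}] := by
  rw [SModEq.sub_mem, Ideal.mem_span_singleton] at h ⊢
  rw [← mul_sub]
  exact mul_dvd_mul_left c h

theorem prod_one_sub_pow_smodEq_one {ι : Type*} (s : Finset ι) (e : ι → ℕ) {x : R} {m : ℕ}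
    (he : ∀ i ∈ s, m ≤ e i) : ∏ i ∈ s, (1 - x ^ e i) ≡ 1 [SMOD Ideal.span {x ^ m}] := by
  rw [← prod_const_one (s := s)]
  refine SModEq.prod fun i hi => ?_
  simpa using (SModEq.refl (1 : R)).sub (pow_smodEq_zero (he i hi))

end Congruence

namespace PowerSeries

variable {R : Type*} [CommRing R]

theorem smodEq_span_X_pow_iff {A B : R⟦X⟧} {N : ℕ} :
    A ≡ B [SMOD Ideal.span {X ^ N}] ↔ ∀ n < N, coeff n A = coeff n B := by
  simp [SModEq.sub_mem, Ideal.mem_span_singleton, X_pow_dvd_iff, sub_eq_zero]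

theorem eq_of_forall_smodEq_span_X_pow {A B : R⟦X⟧}
    (h : ∀ N, A ≡ B [SMOD Ideal.span {X ^ N}]) : A = B :=
  ext fun n => smodEq_span_X_pow_iff.mp (h (n + 1)) n n.lt_succ_self

end PowerSeries

section GaussBinom

variable {R : Type*} [CommRing R] (x : R)

/-- The Gaussian binomial coefficient `[n, k]_x`, extended by `0` to all `k : ℤ`. -/
def gaussBinom : ℕ → ℤ → R
  | 0, k => if k = 0 then 1 else 0
  | n + 1, k => gaussBinom n (k - 1) + x ^ k.toNat * gaussBinom n k

theorem gaussBinom_succ (n : ℕ) (k : ℤ) :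
    gaussBinom x (n + 1) k = gaussBinom x n (k - 1) + x ^ k.toNat * gaussBinom x n k := rfl

theorem gaussBinom_of_neg {k : ℤ} (hk : k < 0) (n : ℕ) : gaussBinom x n k = 0 := by
  induction n generalizing k with
  | zero => simp [gaussBinom, hk.ne]
  | succ n ih => simp [gaussBinom_succ, ih hk, ih (show k - 1 < 0 by omega)]

theorem gaussBinom_of_lt {n : ℕ} {k : ℤ} (hk : n < k) : gaussBinom x n k = 0 := by
  induction n generalizing k with
  | zero => simp [gaussBinom, (show k ≠ 0 by omega)]
  | succ n ih =>
    simp [gaussBinom_succ, ih (show (n : ℤ) < k - 1 by omega), ih (show (n : ℤ) < k by omega)]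

theorem gaussBinom_zero_right (n : ℕ) : gaussBinom x n 0 = 1 := by
  induction n with
  | zero => simp [gaussBinom]
  | succ n ih => simp [gaussBinom_succ, ih, gaussBinom_of_neg x (show (-1 : ℤ) < 0 by norm_num)]

theorem pow_toNat_mul_pow_toNat_mul_gaussBinom {n : ℕ} {k a b : ℤ} {m : ℕ}
    (hab : a + b = m) (h : 0 ≤ k → k ≤ n → 0 ≤ a ∧ 0 ≤ b) :
    x ^ a.toNat * x ^ b.toNat * gaussBinom x n k = x ^ m * gaussBinom x n k := by
  rcases lt_or_ge k 0 with hk | hk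
  · simp [gaussBinom_of_neg x hk]
  rcases lt_or_ge (n : ℤ) k with hk' | hk'
  · simp [gaussBinom_of_lt x hk']
  obtain ⟨ha, hb⟩ := h hk hk'
  rw [← pow_add, show a.toNat + b.toNat = m by omega]

theorem gaussBinom_succ' (n : ℕ) (k : ℤ) :
    gaussBinom x (n + 1) k = x ^ (n + 1 - k).toNat * gaussBinom x n (k - 1) + gaussBinom x n k := by
  induction n generalizing k with
  | zero =>
    rcases eq_or_ne k 0 with rfl | h0
    · simp [gaussBinom]
    rcases eq_or_ne k 1 with rfl | h1
    · simp [gaussBinom]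
    · simp [gaussBinom, h0, h1, sub_eq_zero]
  | succ n ih =>
    have key := pow_toNat_mul_pow_toNat_mul_gaussBinom x (n := n) (k := k - 1)
      (a := k) (b := n + 1 - k) (m := n + 1) (by push_cast; ring) (by omega)
    have key' := pow_toNat_mul_pow_toNat_mul_gaussBinom x (n := n) (k := k - 1)
      (a := n + 1 + 1 - k) (b := k - 1) (m := n + 1) (by push_cast; ring) (by omega)
    rw [gaussBinom_succ x (n + 1) k]
    push_cast
    linear_combination (norm := ring_nf) ih (k - 1) + x ^ k.toNat * ih k
      - x ^ ((n : ℤ) + 1 + 1 - k).toNat * gaussBinom_succ x n (k - 1) - gaussBinom_succ x n k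
      + key - key'

theorem gaussBinom_add_two (n : ℕ) (k : ℤ) :
    gaussBinom x (n + 2) k = x ^ (n + 2 - k).toNat * gaussBinom x n (k - 2)
      + (1 + x ^ (n + 1)) * gaussBinom x n (k - 1) + x ^ k.toNat * gaussBinom x n k := by
  have key := pow_toNat_mul_pow_toNat_mul_gaussBinom x (n := n) (k := k - 1)
    (a := k) (b := n + 1 - k) (m := n + 1) (by push_cast; ring) (by omega)
  rw [gaussBinom_succ, gaussBinom_succ', gaussBinom_succ']
  linear_combination (norm := ring_nf) key

theorem gaussBinom_symm (n : ℕ) (k : ℤ) : gaussBinom x n (n - k) = gaussBinom x n k := by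
  induction n generalizing k with
  | zero =>
    rcases eq_or_ne k 0 with rfl | h0
    · simp
    · simp [gaussBinom, h0]
  | succ n ih =>
    rw [gaussBinom_succ, gaussBinom_succ',
      show ((n + 1 : ℕ) : ℤ) - k - 1 = n - k by push_cast; ring, ih,
      show ((n + 1 : ℕ) : ℤ) - k = n - (k - 1) by push_cast; ring, ih]
    ring_nf

theorem gaussBinom_mul_prod (n k : ℕ) :
    gaussBinom x n k * ∏ i ∈ range k, (1 - x ^ (i + 1)) = ∏ i ∈ range k, (1 - x ^ (n - i)) := by
  induction n generalizing k with
  | zero =>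
    cases k with
    | zero => simp [gaussBinom]
    | succ k => simp [gaussBinom, prod_range_succ', show (k + 1 : ℤ) ≠ 0 by omega]
  | succ n ih =>
    cases k with
    | zero => simp [gaussBinom_zero_right]
    | succ k =>
      have h := ih (k + 1)
      rw [prod_range_succ, prod_range_succ] at h
      rw [gaussBinom_succ, prod_range_succ, prod_range_succ']
      simp only [Nat.add_sub_add_right, Nat.sub_zero, Nat.cast_add_one, add_sub_cancel_right] at h ⊢
      rw [show ((k : ℤ) + 1).toNat = k + 1 by omega]
      have hx : x ^ (k + 1) * (1 - x ^ (n - k)) * ∏ i ∈ range k, (1 - x ^ (n - i))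
          = (x ^ (k + 1) - x ^ (n + 1)) * ∏ i ∈ range k, (1 - x ^ (n - i)) := by
        rcases le_or_gt k n with hkn | hkn
        · rw [show n + 1 = k + 1 + (n - k) by omega, pow_add]
          ring
        · rw [prod_eq_zero (mem_range.2 hkn) (by simp)]
          ring
      linear_combination (1 - x ^ (k + 1)) * ih k + x ^ (k + 1) * h + hx

theorem gaussBinom_mul_prod_smodEq_one {n k L : ℕ} (hkn : 2 * k ≤ n) (hkL : k ≤ L) :
    gaussBinom x n k * ∏ i ∈ range L, (1 - x ^ (i + 1)) ≡ 1 [SMOD Ideal.span {x ^ (k + 1)}] := by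
  have h₁ : ∏ i ∈ range k, (1 - x ^ (n - i)) ≡ 1 [SMOD Ideal.span {x ^ (k + 1)}] :=
    prod_one_sub_pow_smodEq_one _ _ fun i hi => by simp only [mem_range] at hi; omega
  have h₂ : ∏ i ∈ Ico k L, (1 - x ^ (i + 1)) ≡ 1 [SMOD Ideal.span {x ^ (k + 1)}] :=
    prod_one_sub_pow_smodEq_one _ _ fun i hi => by simp only [mem_Ico] at hi; omega
  rw [← prod_range_mul_prod_Ico _ hkL, ← mul_assoc, gaussBinom_mul_prod]
  simpa using h₁.mul h₂

end GaussBinom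

section JacobiExp

/-- The exponent `E_{a,b}(j)` of the `j`-th term of `f(q^a, q^b)` and of `g(q^a, q^b)`. -/
def jacobiExp (a b : ℕ) (j : ℤ) : ℕ := (a * (j * (j - 1) / 2) + b * (j * (j + 1) / 2)).toNat

variable (a b : ℕ)

theorem natCast_jacobiExp (j : ℤ) :
    (jacobiExp a b j : ℤ) = a * (j * (j - 1) / 2) + b * (j * (j + 1) / 2) := by
  have h₁ : 0 ≤ j * (j - 1) / 2 := Int.ediv_nonneg (by nlinarith [Int.le_self_sq j]) zero_le_two
  have h₂ : 0 ≤ j * (j + 1) / 2 := Int.ediv_nonneg (by nlinarith [Int.le_self_sq (-j)]) zero_le_two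
  exact Int.toNat_of_nonneg (by positivity)

theorem two_mul_jacobiExp (j : ℤ) :
    2 * (jacobiExp a b j : ℤ) = a * (j * (j - 1)) + b * (j * (j + 1)) := by
  rw [natCast_jacobiExp, mul_add, mul_left_comm, mul_left_comm 2 (b : ℤ),
    Int.mul_ediv_cancel' (Int.even_mul_pred_self j).two_dvd,
    Int.mul_ediv_cancel' (Int.even_mul_succ_self j).two_dvd]

theorem jacobiExp_sub_one (j : ℤ) :
    (jacobiExp a b j : ℤ) = jacobiExp a b (j - 1) + a * (j - 1) + b * j := by
  linarith [two_mul_jacobiExp a b j, two_mul_jacobiExp a b (j - 1)]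

theorem jacobiExp_add_one (j : ℤ) :
    (jacobiExp a b (j + 1) : ℤ) = jacobiExp a b j + a * j + b * (j + 1) := by
  simpa using jacobiExp_sub_one a b (j + 1)

theorem abs_le_jacobiExp (ha : 1 ≤ a) (hb : 1 ≤ b) (j : ℤ) : |j| ≤ jacobiExp a b j := by
  have h := two_mul_jacobiExp a b j
  have ha' : 0 ≤ ((a : ℤ) - 1) * (j * (j - 1)) :=
    mul_nonneg (by omega) (by nlinarith [Int.le_self_sq j])
  have hb' : 0 ≤ ((b : ℤ) - 1) * (j * (j + 1)) :=
    mul_nonneg (by omega) (by nlinarith [Int.le_self_sq (-j)])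
  have hj := Int.natAbs_le_self_sq j
  rw [Int.natCast_natAbs] at hj
  nlinarith

theorem le_jacobiExp_add {M : ℕ} {j : ℤ} (hj : j.natAbs ≤ M) :
    (a + b) * M ≤ jacobiExp a b j + (a + b) * (M - j.natAbs + 1) := by
  zify [hj]
  nlinarith [two_mul_jacobiExp a b j, abs_mul_abs_self j,
    mul_nonneg (Nat.cast_nonneg a : (0 : ℤ) ≤ a) (sub_nonneg.2 (le_abs_self j)),
    mul_nonneg (Nat.cast_nonneg b : (0 : ℤ) ≤ b) (neg_le_iff_add_nonneg.1 (neg_abs_le j)),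
    mul_nonneg (by positivity : (0 : ℤ) ≤ a + b) (sub_nonneg.2 (Int.le_self_sq (|j| - 1)))]

end JacobiExp

section TripleProduct

variable {R : Type*} [CommRing R] (a b : ℕ) (q : R)

theorem neg_one_pow_natAbs_sub_one (j : ℤ) : (-1 : R) ^ (j - 1).natAbs = -(-1) ^ j.natAbs := by
  rw [← Int.coe_negOnePow, ← Int.coe_negOnePow, Int.negOnePow_sub, Int.negOnePow_one]
  push_cast
  ring

theorem neg_one_pow_natAbs_add_one (j : ℤ) : (-1 : R) ^ (j + 1).natAbs = -(-1) ^ j.natAbs := by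
  rw [← Int.coe_negOnePow, ← Int.coe_negOnePow, Int.negOnePow_succ]
  push_cast
  ring

def jacobiTerm (M : ℕ) (j : ℤ) : R :=
  (-1) ^ j.natAbs * q ^ jacobiExp a b j * gaussBinom (q ^ (a + b)) (2 * M) (M + j)

theorem jacobiTerm_eq_zero {M : ℕ} {j : ℤ} (hj : (M : ℤ) < |j|) : jacobiTerm a b q M j = 0 := by
  rcases abs_cases j with ⟨h, -⟩ | ⟨h, -⟩
  · simp [jacobiTerm, gaussBinom_of_lt _ (show ((2 * M : ℕ) : ℤ) < M + j by push_cast; omega)]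
  · simp [jacobiTerm, gaussBinom_of_neg _ (show (M : ℤ) + j < 0 by omega)]

theorem pow_jacobiExp_mul_gaussBinom_sub_one (M : ℕ) (j : ℤ) :
    q ^ jacobiExp a b j * (q ^ (a + b)) ^ ((M : ℤ) + 1 - j).toNat
        * gaussBinom (q ^ (a + b)) (2 * M) (M + (j - 1))
      = q ^ ((a + b) * M + b) * q ^ jacobiExp a b (j - 1)
        * gaussBinom (q ^ (a + b)) (2 * M) (M + (j - 1)) := by
  rcases le_or_gt j (M + 1) with hj | hj
  · rw [← pow_mul, ← pow_add, ← pow_add]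
    congr 2
    apply Nat.cast_injective (R := ℤ)
    push_cast [Int.toNat_of_nonneg (show 0 ≤ (M : ℤ) + 1 - j by omega)]
    linear_combination jacobiExp_sub_one a b j
  · simp [gaussBinom_of_lt _ (show ((2 * M : ℕ) : ℤ) < M + (j - 1) by push_cast; omega)]

theorem pow_jacobiExp_mul_gaussBinom_add_one (M : ℕ) (j : ℤ) :
    q ^ jacobiExp a b j * (q ^ (a + b)) ^ ((M : ℤ) + (j + 1)).toNat
        * gaussBinom (q ^ (a + b)) (2 * M) (M + (j + 1))
      = q ^ ((a + b) * M + a) * q ^ jacobiExp a b (j + 1)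
        * gaussBinom (q ^ (a + b)) (2 * M) (M + (j + 1)) := by
  rcases le_or_gt (-(M + 1 : ℤ)) j with hj | hj
  · rw [← pow_mul, ← pow_add, ← pow_add]
    congr 2
    apply Nat.cast_injective (R := ℤ)
    push_cast [Int.toNat_of_nonneg (show 0 ≤ (M : ℤ) + (j + 1) by omega)]
    linear_combination -jacobiExp_add_one a b j
  · simp [gaussBinom_of_neg _ (show (M : ℤ) + (j + 1) < 0 by omega)]

theorem jacobiTerm_succ (M : ℕ) (j : ℤ) :
    jacobiTerm a b q (M + 1) j = (1 + (q ^ (a + b)) ^ (2 * M + 1)) * jacobiTerm a b q M j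
      - q ^ ((a + b) * M + b) * jacobiTerm a b q M (j - 1)
      - q ^ ((a + b) * M + a) * jacobiTerm a b q M (j + 1) := by
  have hL := pow_jacobiExp_mul_gaussBinom_sub_one a b q M j
  have hR := pow_jacobiExp_mul_gaussBinom_add_one a b q M j
  simp only [jacobiTerm, neg_one_pow_natAbs_sub_one, neg_one_pow_natAbs_add_one]
  rw [show 2 * (M + 1) = 2 * M + 2 by ring, gaussBinom_add_two]
  push_cast
  rw [show (2 * M + 2 - (M + 1 + j) : ℤ) = M + 1 - j by ring,
    show (M + 1 + j - 2 : ℤ) = M + (j - 1) by ring, show (M + 1 + j - 1 : ℤ) = M + j by ring,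
    show (M + 1 + j : ℤ) = M + (j + 1) by ring]
  linear_combination (-1 : R) ^ j.natAbs * (hL + hR)

theorem sum_Icc_add_of_support {β : Type*} [AddCommMonoid β] {f : ℤ → β} {M : ℕ}
    (hf : ∀ j, (M : ℤ) < |j| → f j = 0) {t : ℤ} (ht : |t| ≤ 1) :
    ∑ j ∈ Icc (-((M : ℤ) + 1)) (M + 1), f (j + t) = ∑ j ∈ Icc (-(M : ℤ)) M, f j := by
  have hmap := sum_map (Icc (-((M : ℤ) + 1)) (M + 1)) (addRightEmbedding t) f
  rw [map_add_right_Icc] at hmap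
  simp only [addRightEmbedding_apply] at hmap
  rw [← hmap]
  refine (sum_subset (fun j hj => ?_) fun j _ hj => hf j ?_).symm
  · rw [mem_Icc] at hj ⊢
    constructor <;> linarith [abs_le.1 ht]
  · rw [mem_Icc, not_and_or, not_le, not_le] at hj
    rcases hj with hj | hj <;> rw [lt_abs] <;> omega

theorem prod_eq_sum_jacobiTerm (M : ℕ) :
    ∏ n ∈ range M, ((1 - q ^ ((a + b) * n + a)) * (1 - q ^ ((a + b) * n + b)))
      = ∑ j ∈ Icc (-(M : ℤ)) M, jacobiTerm a b q M j := by
  induction M with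
  | zero => simp [jacobiTerm, jacobiExp, gaussBinom]
  | succ M ih =>
    have hf : ∀ j, (M : ℤ) < |j| → jacobiTerm a b q M j = 0 :=
      fun j hj => jacobiTerm_eq_zero a b q hj
    have h₀ := sum_Icc_add_of_support hf (t := 0) (by norm_num)
    have h₁ := sum_Icc_add_of_support hf (t := -1) (by norm_num)
    have h₂ := sum_Icc_add_of_support hf (t := 1) (by norm_num)
    simp only [add_zero, ← sub_eq_add_neg] at h₀ h₁
    push_cast
    simp only [jacobiTerm_succ, sum_sub_distrib, ← mul_sum, h₀, h₁, h₂, prod_range_succ, ih]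
    have hpow : q ^ ((a + b) * M + a) * q ^ ((a + b) * M + b) = (q ^ (a + b)) ^ (2 * M + 1) := by
      rw [← pow_add, ← pow_mul]
      ring_nf
    linear_combination (∑ j ∈ Icc (-(M : ℤ)) M, jacobiTerm a b q M j) * hpow

theorem prod_mul_prod_smodEq_sum (M : ℕ) :
    (∏ i ∈ range M, (1 - (q ^ (a + b)) ^ (i + 1)))
        * ∏ n ∈ range M, ((1 - q ^ ((a + b) * n + a)) * (1 - q ^ ((a + b) * n + b)))
      ≡ ∑ j ∈ Icc (-(M : ℤ)) M, (-1) ^ j.natAbs * q ^ jacobiExp a b j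
        [SMOD Ideal.span {q ^ ((a + b) * M)}] := by
  rw [prod_eq_sum_jacobiTerm, mul_sum]
  refine SModEq.sum fun j hj => ?_
  have hjM : j.natAbs ≤ M := by rw [mem_Icc] at hj; omega
  -- symmetry moves the lower index to `M - |j| ≤ M`, where the stabilization applies
  have hsymm : gaussBinom (q ^ (a + b)) (2 * M) (M + j)
      = gaussBinom (q ^ (a + b)) (2 * M) (M - j.natAbs : ℕ) := by
    rcases le_or_gt 0 j with h | h
    · rw [← gaussBinom_symm]
      congr 1
      push_cast
      omega
    · congr 1
      omega
  have hstab := (gaussBinom_mul_prod_smodEq_one (q ^ (a + b)) (n := 2 * M) (k := M - j.natAbs)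
    (L := M) (by omega) (by omega)).mul_left_span (c := (-1) ^ j.natAbs * q ^ jacobiExp a b j)
  have hdvd : q ^ ((a + b) * M) ∣ (-1) ^ j.natAbs * q ^ jacobiExp a b j
      * (q ^ (a + b)) ^ (M - j.natAbs + 1) := by
    rw [mul_assoc, ← pow_mul, ← pow_add]
    exact Dvd.dvd.mul_left (pow_dvd_pow q (le_jacobiExp_add a b hjM)) _
  rw [jacobiTerm, hsymm]
  convert hstab.mono (Ideal.span_singleton_le_span_singleton.mpr hdvd) using 1 <;> ring

end TripleProduct

section ThetaSeries

noncomputable def thetaTrunc (w : ℤ → ℤ) (e : ℤ → ℕ) (M : ℕ) : ℤ⟦X⟧ :=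
  ∑ j ∈ Icc (-(M : ℤ)) M, C (w j) * X ^ e j

theorem coeff_thetaTrunc (w : ℤ → ℤ) (e : ℤ → ℕ) (M n : ℕ) :
    coeff n (thetaTrunc w e M) = ∑ j ∈ Icc (-(M : ℤ)) M, if e j = n then w j else 0 := by
  rw [thetaTrunc, map_sum]
  exact sum_congr rfl fun j _ => by rw [coeff_C_mul_X_pow]; exact if_congr eq_comm rfl rfl

theorem coeff_thetaTrunc_mul (w w' : ℤ → ℤ) (e e' : ℤ → ℕ) (M n : ℕ) :
    coeff n (thetaTrunc w e M * thetaTrunc w' e' M)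
      = ∑ p ∈ Icc (-(M : ℤ)) M ×ˢ Icc (-(M : ℤ)) M,
          if e p.1 + e' p.2 = n then w p.1 * w' p.2 else 0 := by
  rw [thetaTrunc, thetaTrunc, sum_mul_sum, ← sum_product', map_sum]
  refine sum_congr rfl fun p _ => ?_
  rw [show C (w p.1) * X ^ e p.1 * (C (w' p.2) * X ^ e' p.2)
      = C (w p.1 * w' p.2) * X ^ (e p.1 + e' p.2) by rw [map_mul, pow_add]; ring,
    coeff_C_mul_X_pow]
  exact if_congr eq_comm rfl rfl

theorem X_mul_thetaTrunc (w : ℤ → ℤ) (e : ℤ → ℕ) (M : ℕ) :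
    X * thetaTrunc w e M = thetaTrunc w (fun j => e j + 1) M := by
  simp only [thetaTrunc, mul_sum, pow_succ]
  exact sum_congr rfl fun _ _ => by ring

theorem sum_Icc_ite_eq_of_abs_le {w : ℤ → ℤ} {e : ℤ → ℕ} (he : ∀ j, |j| ≤ e j) {n : ℕ} {lo hi : ℤ}
    (hlo : lo ≤ -n) (hhi : n ≤ hi) :
    ∑ j ∈ Icc lo hi, (if e j = n then w j else 0)
      = ∑ j ∈ Icc (-(n : ℤ)) n, if e j = n then w j else 0 := by
  refine (sum_subset (Icc_subset_Icc hlo hhi) fun j _ hj => if_neg fun h => hj ?_).symm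
  have := he j
  rw [mem_Icc, ← abs_le]
  omega

theorem mk_smodEq_thetaTrunc (w : ℤ → ℤ) {e : ℤ → ℕ} (he : ∀ j, |j| ≤ e j) {M N : ℕ}
    (hN : N ≤ M + 1) :
    PowerSeries.mk (fun n : ℕ => ∑ j ∈ Icc (-(n : ℤ) - 1) (n + 1), if e j = n then w j else 0)
      ≡ thetaTrunc w e M [SMOD Ideal.span {X ^ N}] := by
  refine smodEq_span_X_pow_iff.mpr fun n hn => ?_
  rw [coeff_mk, coeff_thetaTrunc]
  exact (sum_Icc_ite_eq_of_abs_le he (by omega) (by omega)).trans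
    (sum_Icc_ite_eq_of_abs_le he (by omega) (by omega)).symm

theorem fJacobi_smodEq {a b : ℕ} (ha : 1 ≤ a) (hb : 1 ≤ b) {M N : ℕ} (hN : N ≤ M + 1) :
    fJacobi a b ≡ thetaTrunc 1 (jacobiExp a b) M [SMOD Ideal.span {X ^ N}] := by
  simp_rw [fJacobi, ← natCast_jacobiExp, Nat.cast_inj]
  exact mk_smodEq_thetaTrunc 1 (abs_le_jacobiExp a b ha hb) hN

theorem gJacobi_smodEq {a b : ℕ} (ha : 1 ≤ a) (hb : 1 ≤ b) {M N : ℕ} (hN : N ≤ M + 1) :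
    gJacobi a b ≡ thetaTrunc (fun j => (-1) ^ j.natAbs) (jacobiExp a b) M
      [SMOD Ideal.span {X ^ N}] := by
  simp_rw [gJacobi, ← natCast_jacobiExp, Nat.cast_inj]
  exact mk_smodEq_thetaTrunc _ (abs_le_jacobiExp a b ha hb) hN

theorem thetaTrunc_neg_one_pow (e : ℤ → ℕ) (M : ℕ) :
    thetaTrunc (fun j => (-1) ^ j.natAbs) e M
      = ∑ j ∈ Icc (-(M : ℤ)) M, (-1) ^ j.natAbs * X ^ e j := by
  simp [thetaTrunc]

end ThetaSeries

section Dissection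

theorem jacobiExp_five_three_add (a b : ℤ) :
    jacobiExp 5 3 a + jacobiExp 5 3 b = jacobiExp 3 1 (a + b) + jacobiExp 2 2 (a - b) := by
  apply Nat.cast_injective (R := ℤ)
  have h₁ := two_mul_jacobiExp 5 3 a
  have h₂ := two_mul_jacobiExp 5 3 b
  have h₃ := two_mul_jacobiExp 3 1 (a + b)
  have h₄ := two_mul_jacobiExp 2 2 (a - b)
  push_cast at h₁ h₂ h₃ h₄ ⊢
  linarith

theorem jacobiExp_one_seven_add (a b : ℤ) :
    jacobiExp 1 7 a + 1 + jacobiExp 1 7 b = jacobiExp 3 1 (a + b + 1) + jacobiExp 2 2 (a - b) := by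
  apply Nat.cast_injective (R := ℤ)
  have h₁ := two_mul_jacobiExp 1 7 a
  have h₂ := two_mul_jacobiExp 1 7 b
  have h₃ := two_mul_jacobiExp 3 1 (a + b + 1)
  have h₄ := two_mul_jacobiExp 2 2 (a - b)
  push_cast at h₁ h₂ h₃ h₄ ⊢
  linarith

/-- The bijection is `p ↦ (p.1 + p.2 + ε, p.1 - p.2)`. -/
theorem card_filter_jacobiExp_eq (ε : ℤ) (hε : ε = 0 ∨ ε = 1) {n M : ℕ} (hn : n ≤ M) :
    #{p ∈ Icc (-(M : ℤ)) M ×ˢ Icc (-(M : ℤ)) M |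
        jacobiExp 3 1 (p.1 + p.2 + ε) + jacobiExp 2 2 (p.1 - p.2) = n}
      = #{p ∈ Icc (-(M : ℤ)) M ×ˢ Icc (-(M : ℤ)) M |
        Even (p.1 + p.2 + ε) ∧ jacobiExp 3 1 p.1 + jacobiExp 2 2 p.2 = n} := by
  have hbound : ∀ s d : ℤ, jacobiExp 3 1 s + jacobiExp 2 2 d = n →
      s + d ≤ n ∧ -(s + d) ≤ n ∧ s - d ≤ n ∧ -(s - d) ≤ n := fun s d h => by
    have hs := abs_le_jacobiExp 3 1 (by norm_num) (by norm_num) s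
    have hd := abs_le_jacobiExp 2 2 (by norm_num) (by norm_num) d
    have : ((jacobiExp 3 1 s + jacobiExp 2 2 d : ℕ) : ℤ) = n := by rw [h]
    push_cast at this
    refine ⟨?_, ?_, ?_, ?_⟩ <;> linarith [le_abs_self s, neg_abs_le s, le_abs_self d, neg_abs_le d]
  apply card_nbij' (fun p => (p.1 + p.2 + ε, p.1 - p.2))
    (fun p => ((p.1 + p.2 - ε) / 2, (p.1 - p.2 - ε) / 2))
  · rintro ⟨a, b⟩ hp
    simp only [coe_filter, mem_product, mem_Icc, Set.mem_ofPred_eq] at hp ⊢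
    obtain ⟨-, h⟩ := hp
    have := hbound _ _ h
    exact ⟨⟨⟨by omega, by omega⟩, by omega, by omega⟩, ⟨a + ε, by ring⟩, h⟩
  · rintro ⟨s, d⟩ hp
    simp only [coe_filter, mem_product, mem_Icc, Set.mem_ofPred_eq] at hp ⊢
    obtain ⟨-, ⟨r, hr⟩, h⟩ := hp
    have := hbound _ _ h
    refine ⟨⟨⟨by omega, by omega⟩, by omega, by omega⟩, ?_⟩
    rwa [show (s + d - ε) / 2 + (s - d - ε) / 2 + ε = s by omega,
      show (s + d - ε) / 2 - (s - d - ε) / 2 = d by omega]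
  · rintro ⟨a, b⟩ -
    simp only [Prod.mk.injEq]
    omega
  · rintro ⟨s, d⟩ hp
    simp only [coe_filter, Set.mem_ofPred_eq] at hp
    obtain ⟨-, ⟨r, hr⟩, -⟩ := hp
    simp only [Prod.mk.injEq]
    omega

theorem neg_one_pow_natAbs_mul_neg_one_pow_natAbs (s d : ℤ) :
    (-1 : ℤ) ^ s.natAbs * (-1) ^ d.natAbs = if Even (s + d) then 1 else -1 := by
  rw [← Int.coe_negOnePow ℤ s, ← Int.coe_negOnePow ℤ d, Int.cast_id, Int.cast_id, ← Units.val_mul,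
    ← Int.negOnePow_add]
  split_ifs with h
  · simp [Int.negOnePow_even _ h]
  · simp [Int.negOnePow_odd _ (Int.not_even_iff_odd.mp h)]

theorem sum_sub_sum_eq_sum_neg_one_pow {n M : ℕ} (hn : n ≤ M) :
    (∑ p ∈ Icc (-(M : ℤ)) M ×ˢ Icc (-(M : ℤ)) M,
        if jacobiExp 5 3 p.1 + jacobiExp 5 3 p.2 = n then (1 : ℤ) else 0)
      - ∑ p ∈ Icc (-(M : ℤ)) M ×ˢ Icc (-(M : ℤ)) M,
        (if jacobiExp 1 7 p.1 + 1 + jacobiExp 1 7 p.2 = n then (1 : ℤ) else 0)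
      = ∑ p ∈ Icc (-(M : ℤ)) M ×ˢ Icc (-(M : ℤ)) M,
        if jacobiExp 3 1 p.1 + jacobiExp 2 2 p.2 = n
        then (-1) ^ p.1.natAbs * (-1) ^ p.2.natAbs else 0 := by
  have h₀ := card_filter_jacobiExp_eq 0 (.inl rfl) hn
  have h₁ := card_filter_jacobiExp_eq 1 (.inr rfl) hn
  simp only [add_zero] at h₀
  simp only [jacobiExp_five_three_add, jacobiExp_one_seven_add, sum_boole, h₀, h₁]
  rw [← sum_boole, ← sum_boole, ← sum_sub_distrib]
  refine sum_congr rfl fun p _ => ?_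
  simp only [neg_one_pow_natAbs_mul_neg_one_pow_natAbs, Int.even_add_one]
  split_ifs <;> simp_all

theorem fJacobi_sq_sub_X_mul_fJacobi_sq_eq_gJacobi_mul :
    fJacobi 5 3 ^ 2 - X * fJacobi 1 7 ^ 2 = gJacobi 3 1 * gJacobi 2 2 := by
  ext n
  have hf := ((fJacobi_smodEq (a := 5) (b := 3) (by norm_num) (by norm_num) (M := n) le_rfl).pow
    2).sub ((SModEq.refl X).mul
      ((fJacobi_smodEq (a := 1) (b := 7) (by norm_num) (by norm_num) (M := n) le_rfl).pow 2))
  have hg := (gJacobi_smodEq (a := 3) (b := 1) (by norm_num) (by norm_num) (M := n) le_rfl).mul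
    (gJacobi_smodEq (a := 2) (b := 2) (by norm_num) (by norm_num) (M := n) le_rfl)
  rw [smodEq_span_X_pow_iff.mp hf n n.lt_succ_self, smodEq_span_X_pow_iff.mp hg n n.lt_succ_self,
    sq, sq, ← mul_assoc, X_mul_thetaTrunc, map_sub, coeff_thetaTrunc_mul, coeff_thetaTrunc_mul,
    coeff_thetaTrunc_mul]
  simpa using sum_sub_sum_eq_sum_neg_one_pow (le_refl n)

end Dissection

section EulerProduct

variable {R : Type*} [CommRing R]

theorem prod_range_mul_eq_prod_prod {β : Type*} [CommMonoid β] (f : ℕ → β) (k n : ℕ) :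
    ∏ i ∈ range (k * n), f i = ∏ i ∈ range n, ∏ j ∈ range k, f (k * i + j) := by
  induction n with
  | zero => simp
  | succ n ih => rw [mul_add_one, prod_range_add, ih, prod_range_succ]

theorem mk_coeff_prod_smodEq (e : ℕ → ℕ) (he : ∀ i, i ≤ e i) {L N : ℕ} (hN : N ≤ L) :
    PowerSeries.mk (fun n => coeff n (∏ i ∈ range (n + 1), (1 - X ^ e i)))
      ≡ ∏ i ∈ range L, (1 - (X : R⟦X⟧) ^ e i) [SMOD Ideal.span {X ^ N}] := by
  refine smodEq_span_X_pow_iff.mpr fun n hn => ?_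
  have htail : ∏ i ∈ Ico (n + 1) L, (1 - (X : R⟦X⟧) ^ e i) ≡ 1 [SMOD Ideal.span {X ^ (n + 1)}] :=
    prod_one_sub_pow_smodEq_one _ _ fun i hi => (mem_Ico.1 hi).1.trans (he i)
  rw [coeff_mk, ← prod_range_mul_prod_Ico _ (show n + 1 ≤ L by omega)]
  exact smodEq_span_X_pow_iff.mp (by simpa using (SModEq.refl _).mul htail.symm) n n.lt_succ_self

theorem jacobi_products_mul_eq_euler_products (q : R) (M : ℕ) :
    ((∏ i ∈ range M, (1 - (q ^ 4) ^ (i + 1)))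
        * ∏ n ∈ range M, ((1 - q ^ (4 * n + 3)) * (1 - q ^ (4 * n + 1))))
      * ((∏ i ∈ range M, (1 - (q ^ 4) ^ (i + 1)))
        * ∏ n ∈ range M, ((1 - q ^ (4 * n + 2)) * (1 - q ^ (4 * n + 2))))
      = (∏ i ∈ range (4 * M), (1 - q ^ (i + 1)))
        * ∏ i ∈ range (2 * M), (1 - q ^ (2 * (i + 1))) := by
  simp only [prod_range_mul_eq_prod_prod _ _ M, ← prod_mul_distrib, prod_range_succ,
    prod_range_zero]
  refine prod_congr rfl fun n _ => ?_
  ring_nf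

end EulerProduct

theorem gJacobi_mul_gJacobi_eq_eulerPhi_mul_eulerPhi2 :
    gJacobi 3 1 * gJacobi 2 2 = eulerPhi * eulerPhi2 := by
  refine eq_of_forall_smodEq_span_X_pow fun N => ?_
  have h₃₁ := (prod_mul_prod_smodEq_sum 3 1 (X : ℤ⟦X⟧) N).mono_span_pow
    (show N ≤ (3 + 1) * N by omega)
  have h₂₂ := (prod_mul_prod_smodEq_sum 2 2 (X : ℤ⟦X⟧) N).mono_span_pow
    (show N ≤ (2 + 2) * N by omega)
  rw [← thetaTrunc_neg_one_pow] at h₃₁ h₂₂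
  have hg := ((gJacobi_smodEq (by norm_num) (by norm_num) N.le_succ).trans h₃₁.symm).mul
    ((gJacobi_smodEq (by norm_num) (by norm_num) N.le_succ).trans h₂₂.symm)
  have hφ := (mk_coeff_prod_smodEq (R := ℤ) (fun i => i + 1) (fun i => i.le_succ)
    (show N ≤ 4 * N by omega)).mul
    (mk_coeff_prod_smodEq (R := ℤ) (fun i => 2 * (i + 1)) (fun i => by omega)
      (show N ≤ 2 * N by omega))
  norm_num at hg
  rw [jacobi_products_mul_eq_euler_products] at hg
  exact hg.trans hφ.symm

/-- `f(q⁵,q³)² − q·f(q,q⁷)² = φ(q)·φ(q²)`. -/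
theorem stmt2 :
    fJacobi 5 3 ^ 2 - (PowerSeries.X : PowerSeries ℤ) * fJacobi 1 7 ^ 2 =
      eulerPhi * eulerPhi2 := by
  rw [fJacobi_sq_sub_X_mul_fJacobi_sq_eq_gJacobi_mul, gJacobi_mul_gJacobi_eq_eulerPhi_mul_eulerPhi2]
end

section
/- In the ring of formal power series ℤ⟦q⟧, the following identity holds: g(q⁶,q⁹)·(g(q⁷,q⁸) − q·g(q²,q¹³)) − q·g(q¹²,q³)·(g(q¹¹,q⁴) + q·g(q,q¹⁴)) = φ(q)². -/
/-!
By the pentagonal number theorem `φ(q) = g(q, q²) = ∑ₘ (-1)ᵐ q^{m(3m+1)/2}`, so `φ(q)²` is a sum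
over pairs `(m, n) ∈ ℤ²`. In the coordinates `x = 6m + 1`, `y = 6n + 1` the exponent is
`(x² + y² - 2) / 24`, and the factorisation `5 = (1 + 2i)(1 - 2i)` in `ℤ[i]` suggests splitting
the pairs by `m + 2n mod 5`. Each of four residue classes is the image of `ℤ²` under an affine map
carrying the summand to a term of `±q^k g(q^a, q^b) g(q^c, q^d)`; on the fifth class the reflection
`(x, y) ↦ ((3x - 4y)/5, (-4x - 3y)/5)` preserves the exponent and flips the sign, so that class
contributes nothing.
-/

open PowerSeries PowerSeries.WithPiTopology Function

theorem hasSum_indicator_range {α β M : Type*} [AddCommMonoid M] [TopologicalSpace M]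
    {f : α → M} {L : β → α} (hL : Injective L) {g : β → M} {a : M} (hg : HasSum g a)
    (hfg : ∀ b, f (L b) = g b) : HasSum ((Set.range L).indicator f) a :=
  hasSum_subtype_iff_indicator.1 (hL.hasSum_range_iff.2 (by simpa [comp_def, hfg] using hg))

theorem HasSum.eq_zero_of_involutive {β M : Type*} [AddCommGroup M] [TopologicalSpace M]
    [IsTopologicalAddGroup M] [T2Space M] [IsAddTorsionFree M] {f : β → M} {a : M}
    (hf : HasSum f a) {σ : β → β} (hσ : Involutive σ) (hfσ : ∀ b, f (σ b) = -f b) : a = 0 := by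
  have hneg : HasSum f (-a) := by
    simpa [comp_def, hfσ] using ((hσ.toPerm σ).hasSum_iff.2 hf).neg
  exact self_eq_neg.1 (hf.unique hneg)

section MonomialFamily

variable {R ι κ : Type*} [Semiring R] [TopologicalSpace R]

theorem summable_monomial_of_finite_setOf_le {e : ι → ℕ} (he : ∀ n, {i | e i ≤ n}.Finite)
    (c : ι → R) : Summable fun i ↦ monomial (e i) (c i) := by
  rw [summable_iff_summable_coeff]
  refine fun n ↦ summable_of_hasFiniteSupport ((he n).subset fun i hi ↦ ?_)
  by_contra h
  exact hi (by simp [coeff_monomial, show n ≠ e i by grind])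

theorem HasSum.monomial_mul [T3Space R] [IsTopologicalSemiring R] {e₁ : ι → ℕ} {e₂ : κ → ℕ}
    {c₁ : ι → R} {c₂ : κ → R} {f g : R⟦X⟧} (h₁ : HasSum (fun i ↦ monomial (e₁ i) (c₁ i)) f)
    (h₂ : HasSum (fun k ↦ monomial (e₂ k) (c₂ k)) g) (he₁ : ∀ n, {i | e₁ i ≤ n}.Finite)
    (he₂ : ∀ n, {k | e₂ k ≤ n}.Finite) :
    HasSum (fun p : ι × κ ↦ monomial (e₁ p.1 + e₂ p.2) (c₁ p.1 * c₂ p.2)) (f * g) := by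
  have hsum : Summable fun p : ι × κ ↦ monomial (e₁ p.1 + e₂ p.2) (c₁ p.1 * c₂ p.2) := by
    refine summable_monomial_of_finite_setOf_le (fun n ↦ ((he₁ n).prod (he₂ n)).subset ?_) _
    intro p (hp : e₁ p.1 + e₂ p.2 ≤ n)
    exact ⟨show e₁ p.1 ≤ n by omega, show e₂ p.2 ≤ n by omega⟩
  simp only [← monomial_mul_monomial] at hsum ⊢
  have : T3Space R⟦X⟧ := inferInstanceAs (T3Space ((Unit →₀ ℕ) → R))
  exact HasSum.mul (f := fun i ↦ monomial (e₁ i) (c₁ i)) (g := fun k ↦ monomial (e₂ k) (c₂ k))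
    h₁ h₂ hsum

end MonomialFamily

theorem coeff_prod_range_one_sub_X_pow_of_lt {R : Type*} [CommRing R] {N M : ℕ} (h : N < M) :
    coeff N (∏ j ∈ Finset.range M, (1 - X ^ (j + 1) : R⟦X⟧)) =
      coeff N (∏ j ∈ Finset.range (N + 1), (1 - X ^ (j + 1) : R⟦X⟧)) := by
  induction M, h using Nat.le_induction with
  | base => rfl
  | succ M hM ih =>
    rw [Finset.prod_range_succ, mul_sub, mul_one, map_sub, coeff_mul_X_pow', if_neg (by omega),
      sub_zero, ih]

theorem eulerPhi_eq_pentagonalSeries : eulerPhi = pentagonalSeries ℤ := by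
  ext N
  obtain ⟨M, hM⟩ := Filter.eventually_atTop.1
    (Filter.tendsto_finset_range.eventually (coeff_prod_one_sub_X_pow_eventually_eq ℤ N))
  rw [eulerPhi, coeff_mk, ← hM (max M (N + 1)) (le_max_left ..),
    coeff_prod_range_one_sub_X_pow_of_lt (lt_of_lt_of_le N.lt_succ_self (le_max_right ..))]

theorem Int.mul_sub_one_nonneg (n : ℤ) : 0 ≤ n * (n - 1) := by
  rcases le_or_gt n 0 with h | h <;> nlinarith

def jacobiExponent (a b : ℕ) (j : ℤ) : ℕ := (a * (j * (j - 1) / 2) + b * (j * (j + 1) / 2)).toNat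

section jacobiExponent

variable (a b : ℕ) (j : ℤ)

theorem natCast_jacobiExponent :
    (jacobiExponent a b j : ℤ) = a * (j * (j - 1) / 2) + b * (j * (j + 1) / 2) := by
  have h₁ := j.mul_sub_one_nonneg
  have h₂ := (j + 1).mul_sub_one_nonneg
  rw [add_sub_cancel_right, mul_comm] at h₂
  refine Int.toNat_of_nonneg (add_nonneg ?_ ?_) <;> positivity

theorem two_mul_jacobiExponent :
    2 * (jacobiExponent a b j : ℤ) = a * (j * (j - 1)) + b * (j * (j + 1)) := by
  rw [natCast_jacobiExponent, mul_add, mul_left_comm, mul_left_comm 2 (b : ℤ),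
    Int.mul_ediv_cancel' (even_iff_two_dvd.1 j.even_mul_pred_self),
    Int.mul_ediv_cancel' (even_iff_two_dvd.1 j.even_mul_succ_self)]

variable {a b}

theorem natAbs_le_jacobiExponent_add_one (hab : a + b ≠ 0) :
    j.natAbs ≤ jacobiExponent a b j + 1 := by
  rcases eq_or_ne j 0 with rfl | hj
  · simp
  have h₁ := (j - 1).mul_sub_one_nonneg
  have h₂ := j.mul_sub_one_nonneg
  have h₃ := (j + 1).mul_sub_one_nonneg
  have h₄ := (j + 2).mul_sub_one_nonneg
  have hu : 2 * |j| - 2 ≤ j * (j - 1) := by rcases abs_cases j with ⟨h, -⟩ | ⟨h, -⟩ <;> nlinarith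
  have hv : 2 * |j| - 2 ≤ j * (j + 1) := by rcases abs_cases j with ⟨h, -⟩ | ⟨h, -⟩ <;> nlinarith
  have ha := mul_le_mul_of_nonneg_left hu (Nat.cast_nonneg (α := ℤ) a)
  have hb := mul_le_mul_of_nonneg_left hv (Nat.cast_nonneg (α := ℤ) b)
  have hab' : (1 : ℤ) ≤ a + b := by omega
  have := Int.one_le_abs hj
  zify
  nlinarith [two_mul_jacobiExponent a b j, Int.natCast_natAbs j]

theorem finite_setOf_jacobiExponent_le (hab : a + b ≠ 0) (n : ℕ) :
    {j | jacobiExponent a b j ≤ n}.Finite :=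
  (Set.finite_Icc (-(n : ℤ) - 1) (n + 1)).subset fun j (hj : jacobiExponent a b j ≤ n) ↦ by
    have := natAbs_le_jacobiExponent_add_one j hab
    rw [Set.mem_Icc]
    omega

end jacobiExponent

theorem hasSum_gJacobi {a b : ℕ} (hab : a + b ≠ 0) :
    HasSum (fun j : ℤ ↦ monomial (jacobiExponent a b j) (j.negOnePow : ℤ)) (gJacobi a b) := by
  rw [hasSum_iff_hasSum_coeff]
  intro N
  have hterm : ∀ j : ℤ, (if N = jacobiExponent a b j then (j.negOnePow : ℤ) else 0) =
      if (a : ℤ) * (j * (j - 1) / 2) + b * (j * (j + 1) / 2) = N then (-1) ^ j.natAbs else 0 := by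
    intro j
    simp only [← natCast_jacobiExponent, Nat.cast_inj, eq_comm (a := N)]
    split_ifs
    · exact Int.cast_id.symm.trans (Int.coe_negOnePow ℤ j)
    · rfl
  simp only [gJacobi, coeff_mk, coeff_monomial, hterm]
  refine hasSum_sum_of_ne_finset_zero fun j hj ↦ if_neg fun h ↦ hj ?_
  have := natAbs_le_jacobiExponent_add_one j hab
  rw [← natCast_jacobiExponent, Nat.cast_inj] at h
  rw [Finset.mem_Icc]
  omega

theorem jacobiExponent_one_two (j : ℤ) : jacobiExponent 1 2 j = pentagonal (-j) := by
  have h₁ := two_mul_jacobiExponent 1 2 j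
  have h₂ := two_mul_natCast_pentagonal_neg j
  push_cast at h₁
  zify
  linarith

theorem gJacobi_one_two : gJacobi 1 2 = pentagonalSeries ℤ := by
  refine (hasSum_gJacobi (by norm_num)).unique ?_
  have := hasSum_pentagonalSeries ℤ
  rw [← (Equiv.neg ℤ).hasSum_iff] at this
  convert this using 2 with j
  simp [jacobiExponent_one_two, monomial_eq_C_mul_X_pow]

noncomputable def jacobiPairTerm (a b c d : ℕ) (p : ℤ × ℤ) : ℤ⟦X⟧ :=
  monomial (jacobiExponent a b p.1 + jacobiExponent c d p.2) ((p.1 + p.2).negOnePow : ℤ)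

theorem hasSum_gJacobi_mul_gJacobi {a b c d : ℕ} (hab : a + b ≠ 0) (hcd : c + d ≠ 0) :
    HasSum (jacobiPairTerm a b c d) (gJacobi a b * gJacobi c d) := by
  convert (hasSum_gJacobi hab).monomial_mul (hasSum_gJacobi hcd)
    (finite_setOf_jacobiExponent_le hab) (finite_setOf_jacobiExponent_le hcd) using 3
  rw [jacobiPairTerm, Int.negOnePow_add, Units.val_mul]

theorem add_jacobiExponent_eq {a b c d a' b' c' d' k : ℕ} {x y x' y' : ℤ}
    (h : a * (x * (x - 1)) + b * (x * (x + 1)) + c * (y * (y - 1)) + d * (y * (y + 1)) =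
      2 * k + a' * (x' * (x' - 1)) + b' * (x' * (x' + 1)) + c' * (y' * (y' - 1)) +
        d' * (y' * (y' + 1))) :
    jacobiExponent a b x + jacobiExponent c d y =
      k + (jacobiExponent a' b' x' + jacobiExponent c' d' y') := by
  zify
  linarith [two_mul_jacobiExponent a b x, two_mul_jacobiExponent c d y,
    two_mul_jacobiExponent a' b' x', two_mul_jacobiExponent c' d' y']

theorem jacobiPairTerm_eq_monomial_mul {a b c d a' b' c' d' k : ℕ} {p q : ℤ × ℤ} {s : ℤ}
    (hexp : jacobiExponent a b p.1 + jacobiExponent c d p.2 =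
      k + (jacobiExponent a' b' q.1 + jacobiExponent c' d' q.2))
    (hsign : Even (p.1 + p.2 - (s + (q.1 + q.2)))) :
    jacobiPairTerm a b c d p = monomial k (s.negOnePow : ℤ) * jacobiPairTerm a' b' c' d' q := by
  rw [jacobiPairTerm, jacobiPairTerm, monomial_mul_monomial, ← Units.val_mul,
    ← Int.negOnePow_add, hexp, (Int.negOnePow_eq_iff _ _).2 hsign]

def fiveClass (r : ℤ) : Set (ℤ × ℤ) := {p | (p.1 + 2 * p.2) % 5 = r}

theorem indicator_fiveClass_add {M : Type*} [AddCommMonoid M] (f : ℤ × ℤ → M) :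
    (fiveClass 0).indicator f + (fiveClass 1).indicator f + (fiveClass 2).indicator f +
      (fiveClass 3).indicator f + (fiveClass 4).indicator f = f := by
  funext p
  simp only [Pi.add_apply, Set.indicator_apply, fiveClass, Set.mem_ofPred_eq]
  have : (p.1 + 2 * p.2) % 5 = 0 ∨ (p.1 + 2 * p.2) % 5 = 1 ∨ (p.1 + 2 * p.2) % 5 = 2 ∨
    (p.1 + 2 * p.2) % 5 = 3 ∨ (p.1 + 2 * p.2) % 5 = 4 := by omega
  rcases this with h | h | h | h | h <;> simp [h]

theorem hasSum_indicator_fiveClass {r : ℤ} {L : ℤ × ℤ → ℤ × ℤ} (hL : Injective L)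
    (hrange : Set.range L = fiveClass r) {a b c d k : ℕ} (hab : a + b ≠ 0) (hcd : c + d ≠ 0)
    {s : ℤ} (hexp : ∀ q, jacobiExponent 1 2 (L q).1 + jacobiExponent 1 2 (L q).2 =
      k + (jacobiExponent a b q.1 + jacobiExponent c d q.2))
    (hsign : ∀ q, Even ((L q).1 + (L q).2 - (s + (q.1 + q.2)))) :
    HasSum ((fiveClass r).indicator (jacobiPairTerm 1 2 1 2))
      (monomial k (s.negOnePow : ℤ) * (gJacobi a b * gJacobi c d)) := by
  rw [← hrange]
  exact hasSum_indicator_range hL ((hasSum_gJacobi_mul_gJacobi hab hcd).mul_left _)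
    fun q ↦ jacobiPairTerm_eq_monomial_mul (hexp q) (hsign q)

theorem hasSum_indicator_fiveClass_zero :
    HasSum ((fiveClass 0).indicator (jacobiPairTerm 1 2 1 2))
      (monomial 0 ((0 : ℤ).negOnePow : ℤ) * (gJacobi 6 9 * gJacobi 7 8)) := by
  refine hasSum_indicator_fiveClass (L := fun q ↦ (q.1 + 2 * q.2, 2 * q.1 - q.2))
    (fun q q' h ↦ ?_) ?_ (by norm_num) (by norm_num) (fun q ↦ add_jacobiExponent_eq ?_) fun q ↦ ?_
  · simp only [Prod.ext_iff] at h ⊢; omega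
  · ext ⟨m, n⟩
    simp only [Set.mem_range, Prod.ext_iff, Prod.exists, fiveClass, Set.mem_ofPred_eq]
    refine ⟨?_, fun h ↦ ⟨(m + 2 * n) / 5, (2 * m - n) / 5, by omega, by omega⟩⟩
    rintro ⟨J, K, rfl, rfl⟩
    omega
  · push_cast; ring
  · rw [Int.even_iff]; omega

theorem hasSum_indicator_fiveClass_one :
    HasSum ((fiveClass 1).indicator (jacobiPairTerm 1 2 1 2))
      (monomial 2 ((1 : ℤ).negOnePow : ℤ) * (gJacobi 12 3 * gJacobi 1 14)) := by
  refine hasSum_indicator_fiveClass (L := fun q ↦ (-q.1 + 2 * q.2 + 1, -2 * q.1 - q.2))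
    (fun q q' h ↦ ?_) ?_ (by norm_num) (by norm_num) (fun q ↦ add_jacobiExponent_eq ?_) fun q ↦ ?_
  · simp only [Prod.ext_iff] at h ⊢; omega
  · ext ⟨m, n⟩
    simp only [Set.mem_range, Prod.ext_iff, Prod.exists, fiveClass, Set.mem_ofPred_eq]
    refine ⟨?_, fun h ↦ ⟨(1 - m - 2 * n) / 5, (2 * m - n - 2) / 5, by omega, by omega⟩⟩
    rintro ⟨J, K, rfl, rfl⟩
    omega
  · push_cast; ring
  · rw [Int.even_iff]; omega

theorem hasSum_indicator_fiveClass_three :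
    HasSum ((fiveClass 3).indicator (jacobiPairTerm 1 2 1 2))
      (monomial 1 ((1 : ℤ).negOnePow : ℤ) * (gJacobi 12 3 * gJacobi 11 4)) := by
  refine hasSum_indicator_fiveClass (L := fun q ↦ (q.1 - 2 * q.2, 2 * q.1 + q.2 - 1))
    (fun q q' h ↦ ?_) ?_ (by norm_num) (by norm_num) (fun q ↦ add_jacobiExponent_eq ?_) fun q ↦ ?_
  · simp only [Prod.ext_iff] at h ⊢; omega
  · ext ⟨m, n⟩
    simp only [Set.mem_range, Prod.ext_iff, Prod.exists, fiveClass, Set.mem_ofPred_eq]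
    refine ⟨?_, fun h ↦ ⟨(m + 2 * n + 2) / 5, (n - 2 * m + 1) / 5, by omega, by omega⟩⟩
    rintro ⟨J, K, rfl, rfl⟩
    omega
  · push_cast; ring
  · rw [Int.even_iff]; omega

theorem hasSum_indicator_fiveClass_four :
    HasSum ((fiveClass 4).indicator (jacobiPairTerm 1 2 1 2))
      (monomial 1 ((1 : ℤ).negOnePow : ℤ) * (gJacobi 6 9 * gJacobi 2 13)) := by
  refine hasSum_indicator_fiveClass (L := fun q ↦ (-q.1 - 2 * q.2 - 1, -2 * q.1 + q.2))
    (fun q q' h ↦ ?_) ?_ (by norm_num) (by norm_num) (fun q ↦ add_jacobiExponent_eq ?_) fun q ↦ ?_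
  · simp only [Prod.ext_iff] at h ⊢; omega
  · ext ⟨m, n⟩
    simp only [Set.mem_range, Prod.ext_iff, Prod.exists, fiveClass, Set.mem_ofPred_eq]
    refine ⟨?_, fun h ↦ ⟨(-m - 2 * n - 1) / 5, (n - 2 * m - 2) / 5, by omega, by omega⟩⟩
    rintro ⟨J, K, rfl, rfl⟩
    omega
  · push_cast; ring
  · rw [Int.even_iff]; omega

-- The reflection `(x, y) ↦ ((3x - 4y)/5, (-4x - 3y)/5)` in `x = 6m + 1`, `y = 6n + 1`.
def fiveClassReflection (p : ℤ × ℤ) : ℤ × ℤ :=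
  ((3 * p.1 - 4 * p.2 - 1) / 5, (-4 * p.1 - 3 * p.2 - 2) / 5)

theorem fiveClassReflection_mem {p : ℤ × ℤ} (hp : p ∈ fiveClass 2) :
    fiveClassReflection p ∈ fiveClass 2 := by
  simp only [fiveClass, fiveClassReflection, Set.mem_ofPred_eq] at hp ⊢
  omega

theorem fiveClassReflection_fiveClassReflection {p : ℤ × ℤ} (hp : p ∈ fiveClass 2) :
    fiveClassReflection (fiveClassReflection p) = p := by
  simp only [fiveClass, Set.mem_ofPred_eq] at hp
  simp only [fiveClassReflection, Prod.ext_iff]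
  omega

theorem jacobiPairTerm_fiveClassReflection {p : ℤ × ℤ} (hp : p ∈ fiveClass 2) :
    jacobiPairTerm 1 2 1 2 (fiveClassReflection p) = -jacobiPairTerm 1 2 1 2 p := by
  obtain ⟨m, n⟩ := p
  simp only [fiveClass, Set.mem_ofPred_eq] at hp
  obtain ⟨P, hP⟩ : ∃ P, 3 * m - 4 * n - 1 = 5 * P := ⟨(3 * m - 4 * n - 1) / 5, by omega⟩
  obtain ⟨Q, hQ⟩ : ∃ Q, -4 * m - 3 * n - 2 = 5 * Q := ⟨(-4 * m - 3 * n - 2) / 5, by omega⟩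
  have hρ : fiveClassReflection (m, n) = (P, Q) := by
    simp only [fiveClassReflection, Prod.mk.injEq]
    omega
  have hPQ : jacobiPairTerm 1 2 1 2 (P, Q) =
      monomial 0 ((1 : ℤ).negOnePow : ℤ) * jacobiPairTerm 1 2 1 2 (m, n) := by
    refine jacobiPairTerm_eq_monomial_mul (add_jacobiExponent_eq ?_) ?_
    -- `P` and `Q` have denominator `5`, so compare the exponents multiplied by `25`.
    · have h25 : (25 : ℤ) * (3 * P ^ 2 + P + 3 * Q ^ 2 + Q) =
          25 * (3 * m ^ 2 + m + 3 * n ^ 2 + n) := by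
        linear_combination (-(3 * (5 * P + 3 * m - 4 * n - 1) + 5)) * hP -
          (3 * (5 * Q - 4 * m - 3 * n - 2) + 5) * hQ
      push_cast
      linear_combination mul_left_cancel₀ (by norm_num) h25
    · rw [Int.even_iff]
      omega
  simp [hρ, hPQ]

theorem hasSum_indicator_fiveClass_two :
    HasSum ((fiveClass 2).indicator (jacobiPairTerm 1 2 1 2)) 0 := by
  classical
  have hsum := ((hasSum_gJacobi_mul_gJacobi (a := 1) (b := 2) (c := 1) (d := 2) (by norm_num)
    (by norm_num)).summable.indicator (fiveClass 2)).hasSum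
  let σ p := if p ∈ fiveClass 2 then fiveClassReflection p else p
  have hσ : Involutive σ := fun p ↦ by
    by_cases hp : p ∈ fiveClass 2
    · simp [σ, hp, fiveClassReflection_mem hp, fiveClassReflection_fiveClassReflection hp]
    · simp [σ, hp]
  have hneg : ∀ p, (fiveClass 2).indicator (jacobiPairTerm 1 2 1 2) (σ p) =
      -(fiveClass 2).indicator (jacobiPairTerm 1 2 1 2) p := fun p ↦ by
    by_cases hp : p ∈ fiveClass 2
    · simp [σ, hp, fiveClassReflection_mem hp, jacobiPairTerm_fiveClassReflection hp]
    · simp [σ, hp]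
  have : IsAddTorsionFree ℤ⟦X⟧ := inferInstanceAs (IsAddTorsionFree ((Unit →₀ ℕ) → ℤ))
  rwa [hsum.eq_zero_of_involutive hσ hneg] at hsum

/-- `g(q⁶,q⁹)·(g(q⁷,q⁸) − q·g(q²,q¹³)) − q·g(q¹²,q³)·(g(q¹¹,q⁴) + q·g(q,q¹⁴)) = φ(q)²`. -/
theorem stmt5 :
    gJacobi 6 9 * (gJacobi 7 8 - (PowerSeries.X : PowerSeries ℤ) * gJacobi 2 13) -
        (PowerSeries.X : PowerSeries ℤ) * gJacobi 12 3 *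
          (gJacobi 11 4 + (PowerSeries.X : PowerSeries ℤ) * gJacobi 1 14) =
      eulerPhi ^ 2 := by
  have hprod := hasSum_gJacobi_mul_gJacobi (a := 1) (b := 2) (c := 1) (d := 2) (by norm_num)
    (by norm_num)
  rw [← indicator_fiveClass_add (jacobiPairTerm 1 2 1 2)] at hprod
  rw [eulerPhi_eq_pentagonalSeries, ← gJacobi_one_two, sq,
    hprod.unique ((((hasSum_indicator_fiveClass_zero.add hasSum_indicator_fiveClass_one).add
      hasSum_indicator_fiveClass_two).add hasSum_indicator_fiveClass_three).add
      hasSum_indicator_fiveClass_four)]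
  simp only [Int.negOnePow_zero, Int.negOnePow_one, Units.val_one, Units.val_neg, map_neg,
    ← X_pow_eq, pow_zero, pow_one, one_mul, neg_mul, add_zero]
  ring
end

section
/- For every k ≥ 0, the number of partitions of 2k into distinct odd parts equals the coefficient of q^k in the formal power series ∑_{i=0}^∞ q^{2i²} / ∏_{m=1}^{2i}(1−q^m); that is, ∑_{k=0}^∞ p_DO(2k) q^k = ∑_{i=0}^∞ q^{2i²} / ∏_{m=1}^{2i}(1−q^m) in ℤ⟦q⟧. -/
/-!
Sort the parts of a partition of `n` into `m` distinct odd parts as `a₀ < a₁ < ⋯ < a_{m-1}` and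
write `a_t = 2t + 1 + 2(e₀ + ⋯ + e_t)`. Then `n = m² + 2 ∑ₛ (m - s) eₛ`, so these partitions
correspond to the partitions of `(n - m²) / 2` into parts at most `m` (with `eₛ` parts equal to
`m - s`), whose generating function is `1 / ∏_{k=1}^{m} (1 - q^k)`. For `n = 2N` the number of
parts is even, `m = 2i`, and `(n - m²) / 2 = N - 2i²`: this is the `i`-th summand of the series.
-/

open Finset PowerSeries

namespace PowerSeries

variable {R : Type*}

def geomSeriesXPow [Semiring R] (d : ℕ) : R⟦X⟧ :=
  mk fun n => if d ∣ n then 1 else 0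

theorem geomSeriesXPow_mul_one_sub_X_pow [CommRing R] {d : ℕ} (hd : d ≠ 0) :
    geomSeriesXPow d * (1 - X ^ d) = (1 : R⟦X⟧) := by
  have : (geomSeriesXPow d : R⟦X⟧) = expand d hd (mk 1) := by
    ext n
    simp [geomSeriesXPow, coeff_expand]
  rw [this, ← expand_X d hd, ← map_one (expand d hd), ← map_sub, ← map_mul,
    mk_one_mul_one_sub_eq_one, map_one]

theorem invOfUnit_prod_one_sub_X_pow [CommRing R] {ι : Type*} (s : Finset ι) {w : ι → ℕ}
    (hw : ∀ k ∈ s, w k ≠ 0) :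
    invOfUnit (∏ k ∈ s, (1 - X ^ w k) : R⟦X⟧) 1 = ∏ k ∈ s, geomSeriesXPow (w k) := by
  refine (left_inv_eq_right_inv ?_ (mul_invOfUnit _ _ ?_)).symm
  · rw [← prod_mul_distrib]
    exact prod_eq_one fun k hk => geomSeriesXPow_mul_one_sub_X_pow (hw k hk)
  · simp only [map_prod, map_sub, map_one, map_pow, constantCoeff_X, Units.val_one]
    exact prod_eq_one fun k hk => by simp [hw k hk]

theorem coeff_prod_geomSeriesXPow [CommSemiring R] {ι : Type*} [DecidableEq ι] (s : Finset ι)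
    (w : ι → ℕ) (n : ℕ) :
    coeff n (∏ k ∈ s, geomSeriesXPow (w k) : R⟦X⟧) =
      #{l ∈ finsuppAntidiag s n | ∀ k ∈ s, w k ∣ l k} := by
  simp only [coeff_prod, geomSeriesXPow, coeff_mk, prod_boole, sum_boole]

end PowerSeries

namespace Nat.Partition

def staircase (e : ℕ → ℕ) (t : ℕ) : ℕ :=
  2 * t + 1 + 2 * ∑ s ∈ range (t + 1), e s

def staircaseParts (m : ℕ) (e : ℕ → ℕ) : Multiset ℕ :=
  (Multiset.range m).map (staircase e)

section Staircase

variable {e e₁ e₂ : ℕ → ℕ} {m : ℕ}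

theorem staircase_zero (e : ℕ → ℕ) : staircase e 0 = 2 * e 0 + 1 := by
  simp [staircase]; ring

theorem staircase_succ (e : ℕ → ℕ) (t : ℕ) :
    staircase e (t + 1) = staircase e t + 2 * e (t + 1) + 2 := by
  simp only [staircase, sum_range_succ _ (t + 1)]; ring

theorem staircase_strictMono (e : ℕ → ℕ) : StrictMono (staircase e) :=
  strictMono_nat_of_lt_succ fun t => by rw [staircase_succ]; omega

theorem odd_staircase (e : ℕ → ℕ) (t : ℕ) : Odd (staircase e t) :=
  ⟨t + ∑ s ∈ range (t + 1), e s, by rw [staircase]; ring⟩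

theorem staircase_congr {t : ℕ} (h : ∀ s ≤ t, e₁ s = e₂ s) : staircase e₁ t = staircase e₂ t := by
  rw [staircase, staircase, sum_congr rfl fun s hs => h s (Nat.lt_succ_iff.mp (mem_range.mp hs))]

theorem sum_staircase (e : ℕ → ℕ) (m : ℕ) :
    ∑ t ∈ range m, staircase e t = m * m + 2 * ∑ s ∈ range m, (m - s) * e s := by
  induction m with
  | zero => simp
  | succ m ih =>
    have shift : ∑ s ∈ range m, (m + 1 - s) * e s = ∑ s ∈ range m, ((m - s) * e s + e s) :=
      sum_congr rfl fun s hs => by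
        rw [Nat.sub_add_comm (mem_range.mp hs).le, add_one_mul]
    rw [sum_range_succ, ih, sum_range_succ (fun s => (m + 1 - s) * e s), shift, sum_add_distrib,
      staircase, sum_range_succ e m]
    simp only [Nat.add_sub_cancel_left, one_mul]
    ring

theorem eq_of_staircase_eq (h : ∀ t < m, staircase e₁ t = staircase e₂ t) :
    ∀ s < m, e₁ s = e₂ s := by
  rintro (_ | s) hs
  · have := h 0 hs
    rw [staircase_zero, staircase_zero] at this
    omega
  · have h₁ := h s (by omega)
    have h₂ := h (s + 1) hs
    rw [staircase_succ, staircase_succ, h₁] at h₂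
    omega

theorem exists_staircase {f : ℕ → ℕ} (hlt : ∀ t, t + 1 < m → f t < f (t + 1))
    (hodd : ∀ t < m, Odd (f t)) : ∃ e, ∀ t < m, f t = staircase e t := by
  refine ⟨fun t => if t = 0 then f 0 / 2 else (f t - f (t - 1)) / 2 - 1, fun t ht => ?_⟩
  induction t with
  | zero =>
    obtain ⟨a, ha⟩ := hodd 0 ht
    rw [staircase_zero]
    simp only [if_true]
    omega
  | succ t ih =>
    obtain ⟨a, ha⟩ := hodd t (by omega)
    obtain ⟨b, hb⟩ := hodd (t + 1) ht
    have := hlt t ht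
    rw [staircase_succ, ← ih (by omega)]
    simp only [Nat.add_one_ne_zero, if_false, Nat.add_sub_cancel]
    omega

theorem card_staircaseParts (m : ℕ) (e : ℕ → ℕ) : (staircaseParts m e).card = m := by
  simp [staircaseParts]

theorem sum_staircaseParts (m : ℕ) (e : ℕ → ℕ) :
    (staircaseParts m e).sum = m * m + 2 * ∑ s ∈ range m, (m - s) * e s :=
  sum_staircase e m

theorem nodup_staircaseParts (m : ℕ) (e : ℕ → ℕ) : (staircaseParts m e).Nodup :=
  (Multiset.nodup_range m).map (staircase_strictMono e).injective

theorem odd_of_mem_staircaseParts {i : ℕ} (hi : i ∈ staircaseParts m e) : Odd i := by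
  obtain ⟨t, -, rfl⟩ := Multiset.mem_map.mp hi
  exact odd_staircase e t

theorem sort_staircaseParts (m : ℕ) (e : ℕ → ℕ) :
    (staircaseParts m e).sort = (List.range m).map (staircase e) := by
  rw [staircaseParts, ← Multiset.map_sort (r := (· ≤ ·)), Multiset.sort_range]
  exact fun a _ b _ => (staircase_strictMono e).le_iff_le.symm

theorem staircaseParts_congr (h : ∀ s < m, e₁ s = e₂ s) :
    staircaseParts m e₁ = staircaseParts m e₂ :=
  Multiset.map_congr rfl fun t ht =>
    staircase_congr fun s hs => h s (by rw [Multiset.mem_range] at ht; omega)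

theorem eq_of_staircaseParts_eq (h : staircaseParts m e₁ = staircaseParts m e₂) :
    ∀ s < m, e₁ s = e₂ s := by
  have := congrArg Multiset.sort h
  rw [sort_staircaseParts, sort_staircaseParts] at this
  exact eq_of_staircase_eq fun t ht => List.map_inj_left.mp this t (List.mem_range.mpr ht)

end Staircase

theorem exists_parts_eq_staircaseParts {n : ℕ} (p : n.Partition) (hnd : p.parts.Nodup)
    (hodd : ∀ i ∈ p.parts, Odd i) : ∃ e, p.parts = staircaseParts p.parts.card e := by
  set l := p.parts.sort
  have hl : l.Pairwise (· < ·) :=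
    ((Multiset.pairwise_sort _ _).and (Multiset.coe_nodup.mp (by rwa [Multiset.sort_eq])))
      |>.imp fun h => lt_of_le_of_ne h.1 h.2
  obtain ⟨e, he⟩ := exists_staircase (m := l.length) (f := fun t => l.getD t 0)
    (fun t ht => by
      simp only [List.getD_eq_getElem _ _ (Nat.lt_of_succ_lt ht), List.getD_eq_getElem _ _ ht]
      exact List.pairwise_iff_getElem.mp hl t (t + 1) _ _ (Nat.lt_succ_self t))
    (fun t ht => by
      rw [List.getD_eq_getElem _ _ ht]
      exact hodd _ ((Multiset.mem_sort _).mp (List.getElem_mem ht)))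
  have hl_eq : l = (List.range l.length).map (staircase e) := by
    refine List.ext_getElem (by simp) fun t h₁ _ => ?_
    rw [List.getElem_map, List.getElem_range, ← he t h₁, List.getD_eq_getElem _ _ h₁]
  refine ⟨e, ?_⟩
  calc p.parts = (l : Multiset ℕ) := (Multiset.sort_eq _ _).symm
    _ = staircaseParts l.length e := by
      conv_lhs => rw [hl_eq]
      rw [staircaseParts, ← Multiset.coe_range, Multiset.map_coe]
    _ = staircaseParts p.parts.card e := by rw [Multiset.length_sort]

def distinctOddsWithCard (n m : ℕ) : Finset n.Partition :=
  {p | (p.parts.Nodup ∧ ∀ i ∈ p.parts, Odd i) ∧ p.parts.card = m}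

/-- Partitions of `M` into parts at most `m`, encoded by `l s`, the total of the parts equal
to `m - s`. -/
def scaledAntidiag (m M : ℕ) : Finset (ℕ →₀ ℕ) :=
  {l ∈ finsuppAntidiag (range m) M | ∀ s ∈ range m, m - s ∣ l s}

theorem eq_staircaseParts_of_mem_distinctOddsWithCard {n m : ℕ} {p : n.Partition}
    (hp : p ∈ distinctOddsWithCard n m) :
    ∃ e, p.parts = staircaseParts m e ∧ n = m * m + 2 * ∑ s ∈ range m, (m - s) * e s := by
  obtain ⟨⟨hnd, hodd⟩, rfl⟩ := (mem_filter.mp hp).2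
  obtain ⟨e, he⟩ := exists_parts_eq_staircaseParts p hnd hodd
  exact ⟨e, he, by rw [← sum_staircaseParts, ← he, p.parts_sum]⟩

theorem distinctOddsWithCard_eq_empty {n m : ℕ} (hn : n < m * m) :
    distinctOddsWithCard n m = ∅ :=
  eq_empty_of_forall_notMem fun _ hp => by
    obtain ⟨e, -, rfl⟩ := eq_staircaseParts_of_mem_distinctOddsWithCard hp
    omega

section ScaledAntidiag

variable {m M : ℕ} {l : ℕ →₀ ℕ}

theorem mul_div_of_mem_scaledAntidiag (hl : l ∈ scaledAntidiag m M) {s : ℕ} (hs : s < m) :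
    (m - s) * (l s / (m - s)) = l s :=
  Nat.mul_div_cancel' ((mem_filter.mp hl).2 s (mem_range.mpr hs))

theorem sum_mul_div_of_mem_scaledAntidiag (hl : l ∈ scaledAntidiag m M) :
    ∑ s ∈ range m, (m - s) * (l s / (m - s)) = M := by
  rw [sum_congr rfl fun s hs => mul_div_of_mem_scaledAntidiag hl (mem_range.mp hs)]
  exact (mem_finsuppAntidiag.mp (mem_filter.mp hl).1).1

theorem eq_of_mem_scaledAntidiag {l₁ l₂ : ℕ →₀ ℕ} (h₁ : l₁ ∈ scaledAntidiag m M)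
    (h₂ : l₂ ∈ scaledAntidiag m M) (h : ∀ s < m, l₁ s / (m - s) = l₂ s / (m - s)) : l₁ = l₂ := by
  ext s
  by_cases hs : s < m
  · rw [← mul_div_of_mem_scaledAntidiag h₁ hs, ← mul_div_of_mem_scaledAntidiag h₂ hs, h s hs]
  · have vanishes {l} (hl : l ∈ scaledAntidiag m M) : l s = 0 :=
      Finsupp.notMem_support_iff.mp fun h =>
        hs (mem_range.mp ((mem_finsuppAntidiag.mp (mem_filter.mp hl).1).2 h))
    rw [vanishes h₁, vanishes h₂]

theorem mem_scaledAntidiag_of_sum {e : ℕ → ℕ} (he : ∑ s ∈ range m, (m - s) * e s = M) :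
    Finsupp.onFinset (range m) (fun s => (m - s) * e s)
      (fun s hs => mem_range.mpr (by
        by_contra! hm
        exact hs (by rw [Nat.sub_eq_zero_of_le hm, zero_mul]))) ∈
      scaledAntidiag m M :=
  mem_filter.mpr ⟨mem_finsuppAntidiag.mpr ⟨he, Finsupp.support_onFinset_subset⟩,
    fun _ _ => dvd_mul_right _ _⟩

end ScaledAntidiag

theorem coeff_invOfUnit_prod_one_sub_X_pow {R : Type*} [CommRing R] (m M : ℕ) :
    coeff M (invOfUnit (∏ k ∈ range m, (1 - X ^ (k + 1)) : R⟦X⟧) 1) = #(scaledAntidiag m M) := by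
  have reflect : ∏ k ∈ range m, (1 - X ^ (k + 1) : R⟦X⟧) = ∏ s ∈ range m, (1 - X ^ (m - s)) := by
    rw [← prod_range_reflect]
    exact prod_congr rfl fun s hs => by rw [Nat.sub_right_comm, Nat.sub_add_cancel (by
      have := mem_range.mp hs; omega)]
  rw [reflect, invOfUnit_prod_one_sub_X_pow _ fun s hs => Nat.sub_ne_zero_of_lt (mem_range.mp hs),
    coeff_prod_geomSeriesXPow]
  rfl

theorem card_distinctOddsWithCard {n m M : ℕ} (hn : n = m * m + 2 * M) :
    #(distinctOddsWithCard n m) = #(scaledAntidiag m M) := by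
  subst hn
  symm
  refine card_bij (fun l hl => ⟨staircaseParts m fun s => l s / (m - s), fun hi => ?_,
      by rw [sum_staircaseParts, sum_mul_div_of_mem_scaledAntidiag hl]⟩) ?_ ?_ ?_
  · exact (odd_of_mem_staircaseParts hi).pos
  · intro l _
    exact mem_filter.mpr ⟨mem_univ _,
      ⟨nodup_staircaseParts _ _, fun _ => odd_of_mem_staircaseParts⟩, card_staircaseParts _ _⟩
  · intro l₁ h₁ l₂ h₂ h
    exact eq_of_mem_scaledAntidiag h₁ h₂
      (eq_of_staircaseParts_eq (congrArg parts h))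
  · intro p hp
    obtain ⟨e, hpe, hsum⟩ := eq_staircaseParts_of_mem_distinctOddsWithCard hp
    refine ⟨_, mem_scaledAntidiag_of_sum (by omega : ∑ s ∈ range m, (m - s) * e s = M), ?_⟩
    refine Nat.Partition.ext (hpe ▸ staircaseParts_congr fun s hs => ?_)
    exact Nat.mul_div_cancel_left _ (Nat.sub_pos_of_lt hs)

end Nat.Partition

open Nat.Partition

theorem pDO_two_mul_eq_sum (N : ℕ) :
    pDO (2 * N) = ∑ i ∈ range (N + 1), #(distinctOddsWithCard (2 * N) (2 * i)) := by
  have card_even_le {p : (2 * N).Partition} (hp : p.parts.Nodup ∧ ∀ i ∈ p.parts, Odd i) :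
      Even p.parts.card ∧ p.parts.card ≤ 2 * N := by
    obtain ⟨e, -, hN⟩ := eq_staircaseParts_of_mem_distinctOddsWithCard
      (mem_filter.mpr ⟨mem_univ p, hp, rfl⟩)
    set K := ∑ s ∈ range p.parts.card, (p.parts.card - s) * e s
    have even_sq : Even (p.parts.card * p.parts.card) := ⟨N - K, by omega⟩
    have := Nat.le_mul_self p.parts.card
    exact ⟨by simpa [Nat.even_mul] using even_sq, by omega⟩
  rw [pDO, Nat.card_eq_fintype_card, Fintype.card_subtype,
    card_eq_sum_card_fiberwise (f := fun p => p.parts.card / 2) (t := range (N + 1))]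
  · refine sum_congr rfl fun i _ => ?_
    rw [filter_filter]
    refine congrArg card (filter_congr fun p _ => and_congr_right fun hp => ?_)
    obtain ⟨⟨k, hk⟩, -⟩ := card_even_le hp
    omega
  · intro p hp
    have := (card_even_le (mem_filter.mp hp).2).2
    simp only [coe_range, Set.mem_Iio]
    omega

theorem coeff_S1 (N : ℕ) :
    coeff N S1 = ∑ i ∈ range (N + 1),
      if 2 * i ^ 2 ≤ N then (#(scaledAntidiag (2 * i) (N - 2 * i ^ 2)) : ℤ)
      else 0 := by
  rw [S1, coeff_mk, map_sum]
  refine sum_congr rfl fun i _ => ?_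
  rw [coeff_X_pow_mul', coeff_invOfUnit_prod_one_sub_X_pow]

/-- `∑_{k≥0} p_DO(2k) q^k = ∑_{i≥0} q^{2i²}/∏_{m=1}^{2i}(1−q^m)` in `ℤ⟦q⟧`. -/
theorem stmt8 :
    (PowerSeries.mk fun k => (pDO (2 * k) : ℤ)) = S1 := by
  ext N
  rw [coeff_mk, coeff_S1, pDO_two_mul_eq_sum, Nat.cast_sum]
  refine sum_congr rfl fun i _ => ?_
  have hsq : 2 * i * (2 * i) = 2 * (2 * i ^ 2) := by ring
  split_ifs with h
  · rw [card_distinctOddsWithCard (M := N - 2 * i ^ 2) (by omega)]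
  · rw [distinctOddsWithCard_eq_empty (by omega), card_empty, Nat.cast_zero]
end

section
/- For every k ≥ 1, the number of partitions of 2k−1 into distinct odd parts equals the coefficient of q^{k−1} in the formal power series ∑_{i=0}^∞ q^{2i²+2i} / ∏_{m=1}^{2i+1}(1−q^m); that is, ∑_{k=1}^∞ p_DO(2k−1) q^{k−1} = ∑_{i=0}^∞ q^{2i²+2i} / ∏_{m=1}^{2i+1}(1−q^m) in ℤ⟦q⟧. -/
/-!
A partition of `2N + 1` into distinct odd parts `2x + 1`, `x ∈ T`, is a finset `T ⊆ ℕ` with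
`2 ∑ T + #T = 2N + 1`, i.e. `#T = 2i + 1` and `∑ T = N - i`. Finsets of size `d` are counted by
`G_d = ∑_{#T = d} q^{∑ T}` (`finsetSumSeries d`); splitting on whether `0 ∈ T` and shifting down
gives `(1 - q^d) G_d = q^{d-1} G_{d-1}`, hence `G_d = q^{d(d-1)/2} / ∏_{k=1}^{d} (1 - q^k)`.
For `d = 2i + 1` the extra factor `q^i` turns `q^{d(d-1)/2}` into `q^{2i² + 2i}`.
-/

open PowerSeries Finset

lemma finite_of_sum_le {P : Finset ℕ → Prop} (n : ℕ) (hP : ∀ T, P T → ∑ x ∈ T, x ≤ n) :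
    Finite {T : Finset ℕ // P T} := by
  refine Set.Finite.to_subtype ((range (n + 1)).powerset.finite_toSet.subset fun T hT => ?_)
  rw [coe_powerset, Set.mem_preimage, Set.mem_powerset_iff, coe_subset]
  intro x hx
  have := (single_le_sum (fun _ _ => Nat.zero_le _) hx).trans (hP T hT)
  rw [mem_range]
  omega

noncomputable def shiftOrInsertZeroEquiv : Finset ℕ ⊕ Finset ℕ ≃ Finset ℕ where
  toFun := Sum.elim (map (addRightEmbedding 1)) fun T => insert 0 (T.map (addRightEmbedding 1))
  invFun T := if 0 ∈ T then .inr (T.preimage (· + 1) (add_left_injective 1).injOn)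
    else .inl (T.preimage (· + 1) (add_left_injective 1).injOn)
  left_inv := by
    rintro (T | T) <;> simp only [Sum.elim_inl, Sum.elim_inr, mem_insert_self, mem_map,
      addRightEmbedding_apply, Nat.add_eq_zero_iff, one_ne_zero, and_false, exists_const,
      ↓reduceIte, Sum.inl.injEq, Sum.inr.injEq] <;> ext x <;> simp
  right_inv T := by
    by_cases h : 0 ∈ T <;> simp only [h, ↓reduceIte, Sum.elim_inl, Sum.elim_inr] <;>
      ext (_ | x) <;> simp [h]

@[simp]
lemma shiftOrInsertZeroEquiv_inl (T : Finset ℕ) :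
    shiftOrInsertZeroEquiv (.inl T) = T.map (addRightEmbedding 1) :=
  rfl

@[simp]
lemma shiftOrInsertZeroEquiv_inr (T : Finset ℕ) :
    shiftOrInsertZeroEquiv (.inr T) = insert 0 (T.map (addRightEmbedding 1)) :=
  rfl

lemma sum_map_succ (T : Finset ℕ) :
    ∑ x ∈ T.map (addRightEmbedding 1), x = ∑ x ∈ T, x + #T := by
  simp [sum_add_distrib]

lemma sum_insert_zero_map_succ (T : Finset ℕ) :
    ∑ x ∈ insert 0 (T.map (addRightEmbedding 1)), x = ∑ x ∈ T, x + #T := by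
  rw [sum_insert (by simp), zero_add, sum_map_succ]

lemma card_insert_zero_map_succ (T : Finset ℕ) :
    #(insert 0 (T.map (addRightEmbedding 1))) = #T + 1 := by
  rw [card_insert_of_notMem (by simp), card_map]

lemma natCard_card_sum_succ (d n : ℕ) :
    Nat.card {T : Finset ℕ // #T = d + 1 ∧ ∑ x ∈ T, x = n} =
      Nat.card {T : Finset ℕ // #T = d + 1 ∧ ∑ x ∈ T, x + (d + 1) = n} +
      Nat.card {T : Finset ℕ // #T = d ∧ ∑ x ∈ T, x + d = n} := by
  let P (T : Finset ℕ) := #T = d + 1 ∧ ∑ x ∈ T, x = n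
  have := finite_of_sum_le (P := fun T => P (shiftOrInsertZeroEquiv (.inl T))) n
    fun T hT => by rw [← hT.2, shiftOrInsertZeroEquiv_inl, sum_map_succ]; omega
  have := finite_of_sum_le (P := fun T => P (shiftOrInsertZeroEquiv (.inr T))) n
    fun T hT => by rw [← hT.2, shiftOrInsertZeroEquiv_inr, sum_insert_zero_map_succ]; omega
  rw [Nat.card_congr ((shiftOrInsertZeroEquiv.subtypeEquiv
    (p := fun x => P (shiftOrInsertZeroEquiv x)) fun _ => Iff.rfl).symm.trans Equiv.subtypeSum),
    Nat.card_sum]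
  congr 1 <;> refine Nat.card_congr (Equiv.subtypeEquivRight fun T => ?_)
  · simp only [P, shiftOrInsertZeroEquiv_inl, card_map, sum_map_succ]
    omega
  · simp only [P, shiftOrInsertZeroEquiv_inr, card_insert_zero_map_succ, sum_insert_zero_map_succ]
    omega

noncomputable def finsetSumSeries (d : ℕ) : PowerSeries ℤ :=
  mk fun n => Nat.card {T : Finset ℕ // #T = d ∧ ∑ x ∈ T, x = n}

lemma coeff_X_pow_mul_finsetSumSeries (d k n : ℕ) :
    coeff n ((X : PowerSeries ℤ) ^ k * finsetSumSeries d) =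
      Nat.card {T : Finset ℕ // #T = d ∧ ∑ x ∈ T, x + k = n} := by
  rw [coeff_X_pow_mul', finsetSumSeries, coeff_mk]
  split_ifs with h
  · exact congrArg _ (Nat.card_congr (Equiv.subtypeEquivRight fun T => by omega))
  · have : IsEmpty {T : Finset ℕ // #T = d ∧ ∑ x ∈ T, x + k = n} := ⟨fun T => by omega⟩
    simp

lemma finsetSumSeries_zero : finsetSumSeries 0 = 1 := by
  ext n
  rw [finsetSumSeries, coeff_mk, coeff_one]
  split_ifs with hn
  · subst hn
    rw [Nat.cast_eq_one]
    exact Nat.card_eq_one_iff_exists.2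
      ⟨⟨∅, rfl, rfl⟩, fun T => Subtype.ext (card_eq_zero.1 T.2.1)⟩
  · have : IsEmpty {T : Finset ℕ // #T = 0 ∧ ∑ x ∈ T, x = n} :=
      ⟨fun T => hn (by rw [← T.2.2, card_eq_zero.1 T.2.1, sum_empty])⟩
    rw [Nat.card_of_isEmpty, Nat.cast_zero]

lemma one_sub_X_pow_mul_finsetSumSeries (d : ℕ) :
    (1 - X ^ (d + 1)) * finsetSumSeries (d + 1) = X ^ d * finsetSumSeries d := by
  ext n
  rw [sub_mul, one_mul, map_sub, coeff_X_pow_mul_finsetSumSeries,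
    coeff_X_pow_mul_finsetSumSeries, finsetSumSeries, coeff_mk, natCard_card_sum_succ]
  push_cast
  ring

lemma prod_mul_finsetSumSeries (d : ℕ) :
    (∏ k ∈ range d, (1 - X ^ (k + 1))) * finsetSumSeries d = X ^ d.choose 2 := by
  induction d with
  | zero => rw [prod_range_zero, one_mul, finsetSumSeries_zero, Nat.choose_zero_succ, pow_zero]
  | succ d ih =>
    rw [prod_range_succ, mul_assoc, one_sub_X_pow_mul_finsetSumSeries, mul_left_comm, ih,
      ← pow_add, Nat.choose_succ_succ', Nat.choose_one_right, add_comm]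

lemma PowerSeries.eq_mul_invOfUnit_of_mul_eq {R : Type*} [CommRing R] {φ ψ χ : PowerSeries R}
    {u : Rˣ} (hu : constantCoeff φ = u) (h : φ * ψ = χ) : ψ = χ * invOfUnit φ u := by
  rw [← h, mul_comm φ, mul_assoc, mul_invOfUnit φ u hu, mul_one]

lemma constantCoeff_prod_one_sub_X_pow {R : Type*} [CommRing R] (d : ℕ) :
    constantCoeff (∏ k ∈ range d, (1 - (X : PowerSeries R) ^ (k + 1))) = ((1 : Rˣ) : R) := by
  simp [map_prod]

lemma finsetSumSeries_eq (d : ℕ) :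
    finsetSumSeries d =
      X ^ d.choose 2 * invOfUnit (∏ k ∈ range d, (1 - (X : PowerSeries ℤ) ^ (k + 1))) 1 :=
  eq_mul_invOfUnit_of_mul_eq (constantCoeff_prod_one_sub_X_pow d) (prod_mul_finsetSumSeries d)

def oddEmbedding : ℕ ↪ ℕ := ⟨(2 * · + 1), fun a b h => by simpa using h⟩

lemma map_oddEmbedding_preimage {S : Finset ℕ} (hS : ∀ x ∈ S, Odd x) :
    (S.preimage oddEmbedding oddEmbedding.injective.injOn).map oddEmbedding = S := by
  ext x
  refine ⟨fun hx => ?_, fun hx => ?_⟩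
  · obtain ⟨k, hk, rfl⟩ := mem_map.1 hx
    exact mem_preimage.1 hk
  · obtain ⟨k, rfl⟩ := hS x hx
    exact mem_map_of_mem _ (mem_preimage.2 hx)

lemma sum_map_oddEmbedding (T : Finset ℕ) :
    ∑ x ∈ T.map oddEmbedding, x = ∑ x ∈ T, (2 * x + 1) :=
  sum_map _ _ _

noncomputable def distinctOddPartitionEquiv (n : ℕ) :
    {p : n.Partition // p.parts.Nodup ∧ ∀ i ∈ p.parts, Odd i} ≃
      {T : Finset ℕ // ∑ x ∈ T, (2 * x + 1) = n} where
  toFun p := ⟨(⟨p.1.parts, p.2.1⟩ : Finset ℕ).preimage oddEmbedding oddEmbedding.injective.injOn, by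
    rw [← sum_map_oddEmbedding, map_oddEmbedding_preimage p.2.2]
    exact (sum_val _).symm.trans p.1.parts_sum⟩
  invFun T := ⟨⟨(T.1.map oddEmbedding).val, fun hi => by
      obtain ⟨k, -, rfl⟩ := mem_map.1 hi
      exact Nat.succ_pos _, (sum_val _).trans ((sum_map_oddEmbedding _).trans T.2)⟩,
    (T.1.map _).nodup, fun i hi => by
      obtain ⟨k, -, rfl⟩ := mem_map.1 hi
      exact odd_two_mul_add_one k⟩
  left_inv p := Subtype.ext (Nat.Partition.ext (congrArg val (map_oddEmbedding_preimage p.2.2)))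
  right_inv T := Subtype.ext (preimage_map _ _)

lemma sum_two_mul_add_one (T : Finset ℕ) : ∑ x ∈ T, (2 * x + 1) = 2 * ∑ x ∈ T, x + #T := by
  rw [sum_add_distrib, ← mul_sum, card_eq_sum_ones]

def oddCardEquiv (N : ℕ) :
    {T : Finset ℕ // ∑ x ∈ T, (2 * x + 1) = 2 * N + 1} ≃
      Σ i : Fin (N + 1), {T : Finset ℕ // #T = 2 * i + 1 ∧ ∑ x ∈ T, x + i = N} where
  toFun T :=
    have := (sum_two_mul_add_one T.1).symm.trans T.2
    ⟨⟨#T.1 / 2, by omega⟩, T.1, by dsimp only; omega, by dsimp only; omega⟩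
  invFun T := ⟨T.2.1, by have := T.2.2; rw [sum_two_mul_add_one]; omega⟩
  left_inv T := rfl
  right_inv := by
    rintro ⟨i, T, hcard, hsum⟩
    refine Sigma.subtype_ext (Fin.ext ?_) rfl
    dsimp only
    omega

lemma pDO_two_mul_add_one (N : ℕ) :
    (pDO (2 * N + 1) : ℤ) =
      ∑ i ∈ range (N + 1), coeff N ((X : PowerSeries ℤ) ^ i * finsetSumSeries (2 * i + 1)) := by
  have (i : Fin (N + 1)) : Finite {T : Finset ℕ // #T = 2 * i + 1 ∧ ∑ x ∈ T, x + i = N} :=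
    finite_of_sum_le N fun T hT => by omega
  rw [pDO, Nat.card_congr ((distinctOddPartitionEquiv _).trans (oddCardEquiv N)), Nat.card_sigma,
    Nat.cast_sum, ← Fin.sum_univ_eq_sum_range]
  simp_rw [coeff_X_pow_mul_finsetSumSeries]

lemma choose_two_two_mul_add_one (i : ℕ) : (2 * i + 1).choose 2 = 2 * i ^ 2 + i := by
  rw [Nat.choose_two_right, Nat.add_sub_cancel]
  exact Nat.div_eq_of_eq_mul_left two_pos (by ring)

lemma X_pow_mul_finsetSumSeries_two_mul_add_one (i : ℕ) :
    X ^ i * finsetSumSeries (2 * i + 1) = X ^ (2 * i ^ 2 + 2 * i) *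
      invOfUnit (∏ k ∈ range (2 * i + 1), (1 - (X : PowerSeries ℤ) ^ (k + 1))) 1 := by
  rw [finsetSumSeries_eq, ← mul_assoc, ← pow_add, choose_two_two_mul_add_one,
    show i + (2 * i ^ 2 + i) = 2 * i ^ 2 + 2 * i by ring]

/-- `∑_{k≥1} p_DO(2k−1) q^{k−1} = ∑_{i≥0} q^{2i²+2i}/∏_{m=1}^{2i+1}(1−q^m)` in `ℤ⟦q⟧`. -/
theorem stmt9 :
    (PowerSeries.mk fun k => (pDO (2 * (k + 1) - 1) : ℤ)) = S2 := by
  ext N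
  rw [coeff_mk, S2, coeff_mk, map_sum, show 2 * (N + 1) - 1 = 2 * N + 1 by omega,
    pDO_two_mul_add_one]
  simp_rw [X_pow_mul_finsetSumSeries_two_mul_add_one]
end
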